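/- arXiv:1801.01368 — 5 statements merged into one kernel-verified Lean document; each statement's English description precedes it below -/
import Mathlib

section
/- Let C be a generalized curvature tensor on Minkowski space ℝ^n and let u be a unit timelike vector such that C is Weyl compatible with u. Then for all vectors x, y, z: C(x,y,z,u) = η(u,y)·E(x,z) − η(u,x)·E(y,z), where E is the electric part of C relative to u. -/
open Finset

noncomputable section

/-- A 4-argument real tensor on `ℝ^n`. -/
abbrev Tensor4 (n : ℕ) :=
  (Fin n → ℝ) → (Fin n → ℝ) → (Fin n → ℝ) → (Fin n → ℝ) → ℝ

/-- Components of the Minkowski metric `diag(-1,1,…,1)` of signature `(-,+,…,+)`.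
Since this matrix is its own inverse, it also gives the components `η^{ab}`
of the inverse metric. -/
def ηm {n : ℕ} (a b : Fin n) : ℝ :=
  if a = b then (if (a : ℕ) = 0 then -1 else 1) else 0

/-- The Minkowski bilinear form `η` of signature `(-,+,…,+)` on `ℝ^n`. -/
def ηf {n : ℕ} (x y : Fin n → ℝ) : ℝ :=
  ∑ i : Fin n, (if (i : ℕ) = 0 then (-1 : ℝ) else 1) * x i * y i

/-- The standard basis `(e_a)` of `ℝ^n`. -/
def stdb {n : ℕ} (a : Fin n) : Fin n → ℝ := fun i => if i = a then 1 else 0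

/-- Multilinearity of a 4-argument map. -/
def Multilinear4 {n : ℕ} (C : Tensor4 n) : Prop :=
  (∀ y z w, IsLinearMap ℝ fun x => C x y z w) ∧
  (∀ x z w, IsLinearMap ℝ fun y => C x y z w) ∧
  (∀ x y w, IsLinearMap ℝ fun z => C x y z w) ∧
  (∀ x y z, IsLinearMap ℝ fun w => C x y z w)

/-- Bilinearity of a 2-argument map. -/
def Bilinear2 {n : ℕ} (S : (Fin n → ℝ) → (Fin n → ℝ) → ℝ) : Prop :=
  (∀ y, IsLinearMap ℝ fun x => S x y) ∧ (∀ x, IsLinearMap ℝ fun y => S x y)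

/-- A generalized curvature tensor: a multilinear map with the algebraic
symmetries of the Riemann tensor (antisymmetry in the first and the last pair,
pair-exchange symmetry, and the first Bianchi identity). -/
def IsGenCurv {n : ℕ} (C : Tensor4 n) : Prop :=
  Multilinear4 C ∧
  (∀ x y z w, C x y z w = - C y x z w) ∧
  (∀ x y z w, C x y z w = - C x y w z) ∧
  (∀ x y z w, C x y z w = C z w x y) ∧
  (∀ x y z w, C x y z w + C y z x w + C z x y w = 0)

/-- Total tracelessness: `Σ_{a,b} η^{ab} C(e_a, x, e_b, y) = 0`. -/
def TotallyTraceless {n : ℕ} (C : Tensor4 n) : Prop :=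
  ∀ x y, (∑ a, ∑ b, ηm a b * C (stdb a) x (stdb b) y) = 0

/-- Weyl compatibility of `C` with the vector `u`. -/
def WeylCompatible {n : ℕ} (C : Tensor4 n) (u : Fin n → ℝ) : Prop :=
  ∀ x y z w,
    ηf u x * C y z w u + ηf u y * C z x w u + ηf u z * C x y w u = 0

/-- The electric part of `C` relative to `u`: `E(x,y) = C(u,x,y,u)`. -/
def electric {n : ℕ} (C : Tensor4 n) (u : Fin n → ℝ)
    (x y : Fin n → ℝ) : ℝ :=
  C u x y u

/-- Full η-self-contraction `T² = Σ T_{abcd} T^{abcd}` of a 4-tensor. -/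
def sq4 {n : ℕ} (T : Tensor4 n) : ℝ :=
  ∑ a, ∑ a', ∑ b, ∑ b', ∑ c, ∑ c', ∑ d, ∑ d',
    ηm a a' * ηm b b' * ηm c c' * ηm d d' *
      T (stdb a) (stdb b) (stdb c) (stdb d) *
      T (stdb a') (stdb b') (stdb c') (stdb d')

/-- Full η-self-contraction `S² = Σ S_{ab} S^{ab}` of a 2-tensor. -/
def sq2 {n : ℕ} (S : (Fin n → ℝ) → (Fin n → ℝ) → ℝ) : ℝ :=
  ∑ a, ∑ a', ∑ b, ∑ b',
    ηm a a' * ηm b b' * S (stdb a) (stdb b) * S (stdb a') (stdb b')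

/-- The tensor `Γ` associated with `C`, its electric part `E`, `u` and `η`. -/
def Γt {n : ℕ} (C : Tensor4 n) (u : Fin n → ℝ) : Tensor4 n :=
  fun x y z w =>
    C x y z w
      - ((n : ℝ) - 2) / ((n : ℝ) - 3) *
          (ηf u x * ηf u w * electric C u y z - ηf u y * ηf u w * electric C u x z
            - ηf u x * ηf u z * electric C u y w + ηf u y * ηf u z * electric C u x w)
      - 1 / ((n : ℝ) - 3) *
          (ηf x w * electric C u y z - ηf y w * electric C u x z
            - ηf x z * electric C u y w + ηf y z * electric C u x w)

theorem WeylCompatible.eta_mul_apply {n : ℕ} {C : Tensor4 n} {u : Fin n → ℝ}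
    (hW : WeylCompatible C u) (hC : ∀ x y z w, C x y z w = - C y x z w) (x y z : Fin n → ℝ) :
    ηf u u * C x y z u = ηf u x * electric C u y z - ηf u y * electric C u x z := by
  have h := hW u x y z
  rw [hC y u] at h
  unfold electric
  linarith

/-- For a generalized curvature tensor `C` on Minkowski `ℝ^n`
that is Weyl compatible with a unit timelike `u`,
`C(x,y,z,u) = η(u,y)·E(x,z) − η(u,x)·E(y,z)`. -/
theorem stmt_0 {n : ℕ} (C : Tensor4 n) (u : Fin n → ℝ)
    (hC : IsGenCurv C) (hu : ηf u u = -1) (hW : WeylCompatible C u) :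
    ∀ x y z, C x y z u = ηf u y * electric C u x z - ηf u x * electric C u y z := by
  intro x y z
  have h := hW.eta_mul_apply hC.2.1 x y z
  rw [hu] at h
  linarith
end
end

section
/- Let C be a generalized curvature tensor on Minkowski space ℝ^n and let u be a unit timelike vector such that C is Weyl compatible with u. Then C(x,y,z,u) = 0 for all vectors x, y, z if and only if the electric part E of C relative to u is identically zero. -/
open Finset

noncomputable section

theorem WeylCompatible.ηf_self_mul_apply {n : ℕ} {C : Tensor4 n} {u : Fin n → ℝ}
    (hW : WeylCompatible C u) (hanti : ∀ x y z w, C x y z w = - C y x z w) (x y z : Fin n → ℝ) :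
    ηf u u * C x y z u = ηf u x * electric C u y z - ηf u y * electric C u x z := by
  have h := hW u x y z
  rw [hanti y u z u] at h
  simp only [electric]
  linarith

/-- For a generalized curvature tensor `C` on Minkowski `ℝ^n`
that is Weyl compatible with a unit timelike `u`, `C(x,y,z,u) = 0` for all
`x,y,z` iff the electric part of `C` relative to `u` vanishes identically. -/
theorem stmt_1 {n : ℕ} (C : Tensor4 n) (u : Fin n → ℝ)
    (hC : IsGenCurv C) (hu : ηf u u = -1) (hW : WeylCompatible C u) :
    (∀ x y z, C x y z u = 0) ↔ (∀ x y, electric C u x y = 0) := by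
  refine ⟨fun h x y => h u x y, fun hE x y z => ?_⟩
  have h := hW.ηf_self_mul_apply hC.2.1 x y z
  rw [hu, hE, hE] at h
  linarith
end
end

section
/- Let C be a totally traceless generalized curvature tensor on Minkowski space ℝ^4 and let u be a unit timelike vector such that C is Weyl compatible with u. Then C is wholly determined by its electric part E: for all vectors x, y, z, w, C(x,y,z,w) = 2·[η(u,x)η(u,w)E(y,z) − η(u,x)η(u,z)E(y,w) + η(u,y)η(u,z)E(x,w) − η(u,y)η(u,w)E(x,z)] + η(x,w)E(y,z) − η(x,z)E(y,w) + η(y,z)E(x,w) − η(y,w)E(x,z). -/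
open Finset

noncomputable section

/-!
Put `K := g ⊙ E` with `g = η + 2 u♭ ⊗ u♭` and `⊙` the Kulkarni–Nomizu product, and `D := C - K`.
Weyl compatibility gives `C(x,y,z,u) = η(u,y) E(x,z) - η(u,x) E(y,z)`, which is also `K(x,y,z,u)`,
so `D` vanishes as soon as one argument is `u`. Since `tr E = 0`, the Ricci contraction of `K`
in dimension `n` is `(4 - n) E`, so `D` is totally traceless as well.

Such a `D` lives on the 3-dimensional space `u^⊥`, where the cross product `x × y`, defined by
`η(x × y, z) = det(u, x, y, z)`, identifies antisymmetric pairs with vectors: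
`D(x,y,z,w) = Φ(x × y, z × w)` for a bilinear form `Φ`. By the Lagrange identity
`η(a × b, c × d) = h(a,c) h(b,d) - h(a,d) h(b,c)`, with `h = η + u♭ ⊗ u♭` the metric of `u^⊥`,
the Ricci contraction of `D` is `h(x,y) tr Φ - Φ(y,x)`. Its vanishing gives `Φ(y,x) = h(x,y) tr Φ`,
hence `tr Φ = 3 tr Φ`, so `Φ = 0` and `D = 0`.
-/

def ηsign {n : ℕ} (i : Fin n) : ℝ := if (i : ℕ) = 0 then -1 else 1

section Minkowski

variable {n : ℕ}

lemma ηsign_mul_self (i : Fin n) : ηsign i * ηsign i = 1 := by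
  unfold ηsign; split_ifs <;> norm_num

lemma ηf_eq_sum (x y : Fin n → ℝ) : ηf x y = ∑ i, ηsign i * x i * y i := rfl

lemma ηf_comm (x y : Fin n → ℝ) : ηf x y = ηf y x := by
  simp only [ηf_eq_sum, mul_right_comm]

lemma bilinear_ηf : Bilinear2 (ηf (n := n)) := by
  refine ⟨fun y => ⟨fun a b => ?_, fun c a => ?_⟩, fun x => ⟨fun a b => ?_, fun c a => ?_⟩⟩ <;>
    simp only [ηf_eq_sum, Pi.add_apply, Pi.smul_apply, smul_eq_mul, Finset.mul_sum,
      ← Finset.sum_add_distrib] <;>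
    exact Finset.sum_congr rfl fun i _ => by ring

lemma ηf_stdb (v : Fin n → ℝ) (a : Fin n) : ηf v (stdb a) = ηsign a * v a := by
  simp [ηf_eq_sum, stdb, mul_comm]

lemma sum_ηm_mul (a : Fin n) (f : Fin n → ℝ) : ∑ b, ηm a b * f b = ηsign a * f a := by
  simp [ηm, ηsign, ite_mul]

lemma sum_smul_stdb (v : Fin n → ℝ) : ∑ a, v a • stdb a = v := by
  ext i; simp [stdb]

lemma IsLinearMap.sum_ηsign_mul {F : (Fin n → ℝ) → ℝ} (hF : IsLinearMap ℝ F)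
    (v : Fin n → ℝ) : ∑ a, ηsign a * ηf v (stdb a) * F (stdb a) = F v := by
  let L := IsLinearMap.mk' F hF
  calc ∑ a, ηsign a * ηf v (stdb a) * F (stdb a) = ∑ a, L (v a • stdb a) := by
        refine Finset.sum_congr rfl fun a _ => ?_
        rw [LinearMap.map_smul, ηf_stdb, ← mul_assoc, ηsign_mul_self, one_mul]; rfl
    _ = F v := by rw [← map_sum, sum_smul_stdb]; rfl

end Minkowski

def spatialη {n : ℕ} (u x y : Fin n → ℝ) : ℝ := ηf x y + ηf u x * ηf u y

section spatialη

variable {n : ℕ}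

lemma spatialη_comm (u x y : Fin n → ℝ) : spatialη u x y = spatialη u y x := by
  rw [spatialη, spatialη, ηf_comm, mul_comm]

lemma IsLinearMap.sum_ηsign_mul_spatialη {F : (Fin n → ℝ) → ℝ} (hF : IsLinearMap ℝ F)
    {u : Fin n → ℝ} (hFu : F u = 0) (v : Fin n → ℝ) :
    ∑ a, ηsign a * spatialη u v (stdb a) * F (stdb a) = F v := by
  have hu : ∑ a, ηsign a * ηf u (stdb a) * F (stdb a) = 0 := by rw [hF.sum_ηsign_mul, hFu]
  simp only [spatialη, mul_add, add_mul, Finset.sum_add_distrib, hF.sum_ηsign_mul]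
  simp only [← mul_assoc, mul_right_comm _ (ηf u v), ← Finset.sum_mul, hu, zero_mul, add_zero]

lemma sum_ηsign_mul_spatialη_self {u : Fin n → ℝ} (hu : ηf u u = -1) :
    ∑ a, ηsign a * spatialη u (stdb a) (stdb a) = n - 1 := by
  have h : ∀ a, ηsign a * spatialη u (stdb a) (stdb a)
      = 1 + ηsign a * ηf u (stdb a) * ηf u (stdb a) := fun a => by
    rw [spatialη, ηf_stdb, stdb, if_pos rfl]
    linear_combination ηsign_mul_self a
  simp [h, Finset.sum_add_distrib, (bilinear_ηf.2 u).sum_ηsign_mul, hu]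
  ring

lemma Bilinear2.eq_sum_spatialη {B : (Fin n → ℝ) → (Fin n → ℝ) → ℝ}
    (hB : Bilinear2 B) {u : Fin n → ℝ} (hu₁ : ∀ y, B u y = 0) (hu₂ : ∀ x, B x u = 0)
    (x y : Fin n → ℝ) :
    B x y = ∑ c, ∑ d, ηsign c * ηsign d * spatialη u x (stdb c) * spatialη u y (stdb d) *
      B (stdb c) (stdb d) := by
  rw [← (hB.1 y).sum_ηsign_mul_spatialη (hu₁ y) x]
  refine Finset.sum_congr rfl fun c _ => ?_
  rw [← (hB.2 _).sum_ηsign_mul_spatialη (hu₂ _) y, Finset.mul_sum]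
  exact Finset.sum_congr rfl fun d _ => by ring

end spatialη

def euclideanη {n : ℕ} (u x y : Fin n → ℝ) : ℝ := ηf x y + 2 * (ηf u x * ηf u y)

section euclideanη

variable {n : ℕ}

lemma euclideanη_comm (u x y : Fin n → ℝ) : euclideanη u x y = euclideanη u y x := by
  rw [euclideanη, euclideanη, ηf_comm, mul_comm (ηf u x)]

lemma bilinear_euclideanη (u : Fin n → ℝ) : Bilinear2 (euclideanη u) := by
  refine ⟨fun y => ⟨fun a b => ?_, fun c a => ?_⟩, fun x => ⟨fun a b => ?_, fun c a => ?_⟩⟩ <;>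
  simp only [euclideanη, (bilinear_ηf.1 _).map_add, (bilinear_ηf.2 _).map_add,
    (bilinear_ηf.1 _).map_smul, (bilinear_ηf.2 _).map_smul, smul_eq_mul] <;> ring

lemma euclideanη_self_right {u : Fin n → ℝ} (hu : ηf u u = -1) (x : Fin n → ℝ) :
    euclideanη u x u = -ηf u x := by
  rw [euclideanη, hu, ηf_comm]; ring

lemma sum_ηsign_mul_euclideanη_self {u : Fin n → ℝ} (hu : ηf u u = -1) :
    ∑ a, ηsign a * euclideanη u (stdb a) (stdb a) = n - 2 := by
  have h : ∀ a, ηsign a * euclideanη u (stdb a) (stdb a)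
      = ηsign a * spatialη u (stdb a) (stdb a) + ηsign a * ηf u (stdb a) * ηf u (stdb a) :=
    fun a => by rw [euclideanη, spatialη]; ring
  simp only [h, Finset.sum_add_distrib, sum_ηsign_mul_spatialη_self hu,
    (bilinear_ηf.2 u).sum_ηsign_mul, hu]
  ring

lemma IsLinearMap.sum_ηsign_mul_euclideanη {F : (Fin n → ℝ) → ℝ} (hF : IsLinearMap ℝ F)
    {u : Fin n → ℝ} (hFu : F u = 0) (v : Fin n → ℝ) :
    ∑ a, ηsign a * euclideanη u v (stdb a) * F (stdb a) = F v := by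
  have h : ∀ a, ηsign a * euclideanη u v (stdb a) * F (stdb a)
      = ηsign a * ηf v (stdb a) * F (stdb a)
        + 2 * ηf u v * (ηsign a * ηf u (stdb a) * F (stdb a)) :=
    fun a => by rw [euclideanη]; ring
  simp only [h, Finset.sum_add_distrib, ← Finset.mul_sum, hF.sum_ηsign_mul, hFu, mul_zero,
    add_zero]

end euclideanη

def ricci {n : ℕ} (D : Tensor4 n) (x y : Fin n → ℝ) : ℝ := ∑ a, ηsign a * D (stdb a) x (stdb a) y

lemma totallyTraceless_iff {n : ℕ} {C : Tensor4 n} :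
    TotallyTraceless C ↔ ∀ x y, ricci C x y = 0 := by
  simp only [TotallyTraceless, ricci, sum_ηm_mul]

lemma ricci_sub {n : ℕ} (C D : Tensor4 n) (x y : Fin n → ℝ) :
    ricci (C - D) x y = ricci C x y - ricci D x y := by
  simp only [ricci, Pi.sub_apply, mul_sub, Finset.sum_sub_distrib]

lemma Multilinear4.sub {n : ℕ} {C D : Tensor4 n} (hC : Multilinear4 C) (hD : Multilinear4 D) :
    Multilinear4 (C - D) :=
  ⟨fun y z w => ((hC.1 y z w).mk' _ - (hD.1 y z w).mk' _).isLinear,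
    fun x z w => ((hC.2.1 x z w).mk' _ - (hD.2.1 x z w).mk' _).isLinear,
    fun x y w => ((hC.2.2.1 x y w).mk' _ - (hD.2.2.1 x y w).mk' _).isLinear,
    fun x y z => ((hC.2.2.2 x y z).mk' _ - (hD.2.2.2 x y z).mk' _).isLinear⟩

lemma det_of_four {R : Type*} [CommRing R] (u a b c : Fin 4 → R) :
    Matrix.det (Matrix.of ![u, a, b, c]) =
      u 0 * (a 1 * (b 2 * c 3 - b 3 * c 2) - a 2 * (b 1 * c 3 - b 3 * c 1)
        + a 3 * (b 1 * c 2 - b 2 * c 1))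
      - u 1 * (a 0 * (b 2 * c 3 - b 3 * c 2) - a 2 * (b 0 * c 3 - b 3 * c 0)
        + a 3 * (b 0 * c 2 - b 2 * c 0))
      + u 2 * (a 0 * (b 1 * c 3 - b 3 * c 1) - a 1 * (b 0 * c 3 - b 3 * c 0)
        + a 3 * (b 0 * c 1 - b 1 * c 0))
      - u 3 * (a 0 * (b 1 * c 2 - b 2 * c 1) - a 1 * (b 0 * c 2 - b 2 * c 0)
        + a 2 * (b 0 * c 1 - b 1 * c 0)) := by
  simp [Matrix.det_succ_row_zero, Fin.sum_univ_succ, Fin.succAbove]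
  ring

lemma ηf_fin_four (x y : Fin 4 → ℝ) :
    ηf x y = -(x 0 * y 0) + x 1 * y 1 + x 2 * y 2 + x 3 * y 3 := by
  simp [ηf_eq_sum, Fin.sum_univ_four, ηsign]

def cross (u a b : Fin 4 → ℝ) : Fin 4 → ℝ :=
  fun i => ηsign i * Matrix.det (Matrix.of ![u, a, b, stdb i])

lemma ηf_cross (u a b c : Fin 4 → ℝ) :
    ηf (cross u a b) c = Matrix.det (Matrix.of ![u, a, b, c]) := by
  simp only [ηf_eq_sum, cross, Fin.sum_univ_four, det_of_four]
  simp [stdb, ηsign]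
  ring

lemma ηf_cross_self (u a b : Fin 4 → ℝ) : ηf (cross u a b) u = 0 := by
  rw [ηf_cross]
  exact Matrix.det_zero_of_row_eq (i := 0) (j := 3) (by decide) rfl

lemma ηf_cross_rotate (u a b c : Fin 4 → ℝ) : ηf (cross u a b) c = ηf (cross u b c) a := by
  rw [ηf_cross, ηf_cross, det_of_four, det_of_four]
  ring

lemma spatialη_cross (u a b c : Fin 4 → ℝ) :
    spatialη u (cross u a b) c = ηf (cross u b c) a := by
  rw [spatialη, ηf_comm u, ηf_cross_self, zero_mul, add_zero, ηf_cross_rotate]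

lemma ηf_cross_cross {u : Fin 4 → ℝ} (hu : ηf u u = -1) (a b c d : Fin 4 → ℝ) :
    ηf (cross u a b) (cross u c d) =
      spatialη u a c * spatialη u b d - spatialη u a d * spatialη u b c := by
  linear_combination (norm := skip) (ηf a d * ηf b c - ηf a c * ηf b d) * hu
  simp only [spatialη, ηf_fin_four, cross, det_of_four]
  simp [stdb, ηsign]
  ring

def hodgeDual (u : Fin 4 → ℝ) (B : (Fin 4 → ℝ) → (Fin 4 → ℝ) → ℝ) (p : Fin 4 → ℝ) : ℝ :=
  (1 / 2) * ∑ c, ∑ d, ηsign c * ηsign d * B (stdb c) (stdb d) * ηf (cross u (stdb c) (stdb d)) p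

lemma hodgeDual_self (u : Fin 4 → ℝ) (B : (Fin 4 → ℝ) → (Fin 4 → ℝ) → ℝ) :
    hodgeDual u B u = 0 := by
  simp [hodgeDual, ηf_cross_self]

lemma isLinearMap_hodgeDual (u : Fin 4 → ℝ) (B : (Fin 4 → ℝ) → (Fin 4 → ℝ) → ℝ) :
    IsLinearMap ℝ (hodgeDual u B) := by
  constructor
  · intro p q
    simp only [hodgeDual, (bilinear_ηf.2 _).map_add, mul_add, Finset.sum_add_distrib]
  · intro r p
    simp only [hodgeDual, (bilinear_ηf.2 _).map_smul, smul_eq_mul, Finset.mul_sum]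
    exact Finset.sum_congr rfl fun c _ => Finset.sum_congr rfl fun d _ => by ring

lemma isLinearMap_hodgeDual_of_forall (u p : Fin 4 → ℝ)
    {G : (Fin 4 → ℝ) → (Fin 4 → ℝ) → (Fin 4 → ℝ) → ℝ} (hG : ∀ c d, IsLinearMap ℝ (G c d)) :
    IsLinearMap ℝ fun q => hodgeDual u (fun c d => G c d q) p := by
  constructor
  · intro q q'
    simp only [hodgeDual, (hG _ _).map_add, mul_add, add_mul, Finset.sum_add_distrib]
  · intro r q
    simp only [hodgeDual, (hG _ _).map_smul, smul_eq_mul, Finset.mul_sum]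
    exact Finset.sum_congr rfl fun c _ => Finset.sum_congr rfl fun d _ => by ring

lemma hodgeDual_cross {u : Fin 4 → ℝ} (hu : ηf u u = -1) {B : (Fin 4 → ℝ) → (Fin 4 → ℝ) → ℝ}
    (hB : Bilinear2 B) (hanti : ∀ x y, B x y = -B y x) (hBu : ∀ y, B u y = 0)
    (x y : Fin 4 → ℝ) : hodgeDual u B (cross u x y) = B x y := by
  have hBu' : ∀ x, B x u = 0 := fun x => by rw [hanti, hBu, neg_zero]
  have hsum : ∑ c, ∑ d, ηsign c * ηsign d * B (stdb c) (stdb d) *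
        ηf (cross u (stdb c) (stdb d)) (cross u x y) = B x y - B y x := by
    rw [hB.eq_sum_spatialη hBu hBu' x y, hB.eq_sum_spatialη hBu hBu' y x,
      ← Finset.sum_sub_distrib]
    refine Finset.sum_congr rfl fun c _ => ?_
    rw [← Finset.sum_sub_distrib]
    refine Finset.sum_congr rfl fun d _ => ?_
    rw [ηf_cross_cross hu, spatialη_comm u (stdb c), spatialη_comm u (stdb d),
      spatialη_comm u (stdb c), spatialη_comm u (stdb d)]
    ring
  rw [hodgeDual, hsum, hanti y x]
  ring

lemma Bilinear2.sum_ηsign_mul_cross {u : Fin 4 → ℝ} (hu : ηf u u = -1)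
    {Φ : (Fin 4 → ℝ) → (Fin 4 → ℝ) → ℝ} (hΦ : Bilinear2 Φ) (hu₁ : ∀ q, Φ u q = 0)
    (hu₂ : ∀ p, Φ p u = 0) (x y : Fin 4 → ℝ) :
    ∑ a, ηsign a * Φ (cross u (stdb a) x) (cross u (stdb a) y)
      = spatialη u x y * ∑ i, ηsign i * Φ (stdb i) (stdb i) - Φ y x := by
  have hterm : ∀ i j, ∑ a, ηsign a * (ηsign i * ηsign j * spatialη u (cross u (stdb a) x) (stdb i)
        * spatialη u (cross u (stdb a) y) (stdb j) * Φ (stdb i) (stdb j))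
      = ηsign i * ηsign j * Φ (stdb i) (stdb j) * (spatialη u y x * spatialη u (stdb j) (stdb i)
        - spatialη u y (stdb i) * spatialη u (stdb j) x) := fun i j => by
    simp only [spatialη_cross]
    rw [← ηf_cross_cross hu, ← (bilinear_ηf.2 (cross u y (stdb j))).sum_ηsign_mul, Finset.mul_sum]
    exact Finset.sum_congr rfl fun a _ => by rw [ηf_comm (cross u x (stdb i))]; ring
  have hdiag : ∀ i, ∑ j, ηsign j * spatialη u (stdb j) (stdb i) * Φ (stdb i) (stdb j)
      = Φ (stdb i) (stdb i) := fun i => by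
    simp only [spatialη_comm u _ (stdb i)]
    exact (hΦ.2 _).sum_ηsign_mul_spatialη (hu₂ _) _
  calc ∑ a, ηsign a * Φ (cross u (stdb a) x) (cross u (stdb a) y)
      = ∑ i, ∑ j, ∑ a, ηsign a * (ηsign i * ηsign j * spatialη u (cross u (stdb a) x) (stdb i)
          * spatialη u (cross u (stdb a) y) (stdb j) * Φ (stdb i) (stdb j)) := by
        simp only [hΦ.eq_sum_spatialη hu₁ hu₂ (cross u _ x), Finset.mul_sum]
        rw [Finset.sum_comm]
        exact Finset.sum_congr rfl fun i _ => Finset.sum_comm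
    _ = spatialη u x y * ∑ i, ηsign i * Φ (stdb i) (stdb i) - Φ y x := by
        simp only [hterm, mul_sub, Finset.sum_sub_distrib]
        rw [hΦ.eq_sum_spatialη hu₁ hu₂ y x, spatialη_comm u x y, Finset.mul_sum]
        congr 1
        · refine Finset.sum_congr rfl fun i _ => ?_
          rw [← hdiag i, Finset.mul_sum, Finset.mul_sum]
          exact Finset.sum_congr rfl fun j _ => by ring
        · exact Finset.sum_congr rfl fun i _ => Finset.sum_congr rfl fun j _ => by
            rw [spatialη_comm u (stdb j) x]; ring

theorem Multilinear4.eq_zero_of_ricci_eq_zero {D : Tensor4 4} (hD : Multilinear4 D)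
    {u : Fin 4 → ℝ} (hu : ηf u u = -1) (hanti₁ : ∀ x y z w, D x y z w = -D y x z w)
    (hanti₂ : ∀ x y z w, D x y z w = -D x y w z) (hu₁ : ∀ y z w, D u y z w = 0)
    (hu₄ : ∀ x y z, D x y z u = 0) (hric : ∀ x y, ricci D x y = 0) (x y z w : Fin 4 → ℝ) :
    D x y z w = 0 := by
  set Φ := fun p q => hodgeDual u (fun c d => hodgeDual u (D c d) q) p with hΦdef
  have hΦ : Bilinear2 Φ := ⟨fun q => isLinearMap_hodgeDual u _,
    fun p => isLinearMap_hodgeDual_of_forall u p fun c d => isLinearMap_hodgeDual u (D c d)⟩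
  have hΦu₁ : ∀ q, Φ u q = 0 := fun q => hodgeDual_self u _
  have hΦu₂ : ∀ p, Φ p u = 0 := fun p => by simp only [hΦdef, hodgeDual_self]; simp [hodgeDual]
  have hD_eq : ∀ x y z w, D x y z w = Φ (cross u x y) (cross u z w) := fun x y z w => by
    have hinner : ∀ c d, hodgeDual u (D c d) (cross u z w) = D c d z w := fun c d =>
      hodgeDual_cross hu ⟨hD.2.2.1 c d, hD.2.2.2 c d⟩ (hanti₂ c d)
        (fun w => by rw [hanti₂, hu₄, neg_zero]) z w
    simp only [hΦdef, hinner]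
    exact (hodgeDual_cross hu ⟨fun y => hD.1 y z w, fun x => hD.2.1 x z w⟩
      (fun x y => hanti₁ x y z w) (fun y => hu₁ y z w) x y).symm
  have hΦ_eq : ∀ x y, Φ y x = spatialη u x y * ∑ i, ηsign i * Φ (stdb i) (stdb i) :=
    fun x y => by
      have h0 : ∑ a, ηsign a * Φ (cross u (stdb a) x) (cross u (stdb a) y) = 0 := by
        rw [← hric x y, ricci]; simp only [hD_eq]
      linarith [hΦ.sum_ηsign_mul_cross hu hΦu₁ hΦu₂ x y]
  set τ := ∑ i, ηsign i * Φ (stdb i) (stdb i)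
  have hτ : τ = 0 := by
    have h : τ = 3 * τ := by
      calc τ = ∑ i, ηsign i * spatialη u (stdb i) (stdb i) * τ :=
            Finset.sum_congr rfl fun i _ => by rw [hΦ_eq, mul_assoc]
        _ = 3 * τ := by rw [← Finset.sum_mul, sum_ηsign_mul_spatialη_self hu]; norm_num
    linarith
  rw [hD_eq, hΦ_eq, hτ, mul_zero]

/-- Minus the usual Kulkarni–Nomizu product, to match the convention `E(x,y) = C(u,x,y,u)`. -/
def kulkarniNomizu {n : ℕ} (h k : (Fin n → ℝ) → (Fin n → ℝ) → ℝ) : Tensor4 n :=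
  fun x y z w => h x w * k y z - h x z * k y w + h y z * k x w - h y w * k x z

section kulkarniNomizu

variable {n : ℕ} {h k : (Fin n → ℝ) → (Fin n → ℝ) → ℝ}

lemma kulkarniNomizu_swap₁₂ (x y z w : Fin n → ℝ) :
    kulkarniNomizu h k x y z w = -kulkarniNomizu h k y x z w := by
  simp only [kulkarniNomizu]; ring

lemma kulkarniNomizu_swap₃₄ (x y z w : Fin n → ℝ) :
    kulkarniNomizu h k x y z w = -kulkarniNomizu h k x y w z := by
  simp only [kulkarniNomizu]; ring

lemma kulkarniNomizu_pair_comm (hh : ∀ x y, h x y = h y x) (hk : ∀ x y, k x y = k y x)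
    (x y z w : Fin n → ℝ) : kulkarniNomizu h k x y z w = kulkarniNomizu h k z w x y := by
  simp only [kulkarniNomizu, hh z, hh w, hk z, hk w]; ring

lemma Bilinear2.multilinear4_kulkarniNomizu (hh : Bilinear2 h) (hk : Bilinear2 k) :
    Multilinear4 (kulkarniNomizu h k) := by
  refine ⟨fun y z w => ⟨fun a b => ?_, fun c a => ?_⟩, fun x z w => ⟨fun a b => ?_, fun c a => ?_⟩,
    fun x y w => ⟨fun a b => ?_, fun c a => ?_⟩, fun x y z => ⟨fun a b => ?_, fun c a => ?_⟩⟩ <;>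
  simp only [kulkarniNomizu, (hh.1 _).map_add, (hh.2 _).map_add, (hk.1 _).map_add,
    (hk.2 _).map_add, (hh.1 _).map_smul, (hh.2 _).map_smul, (hk.1 _).map_smul,
    (hk.2 _).map_smul, smul_eq_mul] <;> ring

end kulkarniNomizu

namespace IsGenCurv

variable {n : ℕ} {C : Tensor4 n}

lemma electric_comm (hC : IsGenCurv C) (u x y : Fin n → ℝ) :
    electric C u x y = electric C u y x := by
  rw [electric, electric, hC.2.2.2.1, hC.2.1, hC.2.2.1, neg_neg]

lemma electric_self_right (hC : IsGenCurv C) (u x : Fin n → ℝ) : electric C u x u = 0 := by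
  have := hC.2.2.1 u x u u
  rw [electric]; linarith

lemma bilinear_electric (hC : IsGenCurv C) (u : Fin n → ℝ) : Bilinear2 (electric C u) :=
  ⟨fun y => hC.1.2.1 u y u, fun x => hC.1.2.2.1 u x u⟩

lemma sum_ηsign_mul_electric (hC : IsGenCurv C) (u : Fin n → ℝ) :
    ∑ a, ηsign a * electric C u (stdb a) (stdb a) = -ricci C u u := by
  rw [ricci, ← Finset.sum_neg_distrib]
  exact Finset.sum_congr rfl fun a _ => by rw [electric, hC.2.1]; ring

lemma ricci_kulkarniNomizu_electric (hC : IsGenCurv C) {u : Fin n → ℝ} (hu : ηf u u = -1)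
    (hCu : ricci C u u = 0) (x y : Fin n → ℝ) :
    ricci (kulkarniNomizu (euclideanη u) (electric C u)) x y = (4 - n) * electric C u x y := by
  have hE := hC.bilinear_electric u
  have hEu : ∀ x, electric C u x u = 0 := hC.electric_self_right u
  have h₁ : ∑ a, ηsign a * euclideanη u y (stdb a) * electric C u x (stdb a) = electric C u x y :=
    (hE.2 x).sum_ηsign_mul_euclideanη (hEu x) y
  have h₂ : ∑ a, ηsign a * euclideanη u x (stdb a) * electric C u y (stdb a) = electric C u y x :=
    (hE.2 y).sum_ηsign_mul_euclideanη (hEu y) x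
  have hterm : ∀ a, ηsign a * kulkarniNomizu (euclideanη u) (electric C u) (stdb a) x (stdb a) y
      = ηsign a * euclideanη u y (stdb a) * electric C u x (stdb a)
        - ηsign a * euclideanη u (stdb a) (stdb a) * electric C u x y
        + ηsign a * euclideanη u x (stdb a) * electric C u y (stdb a)
        - euclideanη u x y * (ηsign a * electric C u (stdb a) (stdb a)) := fun a => by
    simp only [kulkarniNomizu, euclideanη_comm u (stdb a), hC.electric_comm u x (stdb a),
      hC.electric_comm u (stdb a) y]
    ring
  rw [ricci]
  simp only [hterm, Finset.sum_add_distrib, Finset.sum_sub_distrib, ← Finset.sum_mul,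
    ← Finset.mul_sum, h₁, h₂, sum_ηsign_mul_euclideanη_self hu, hC.sum_ηsign_mul_electric, hCu,
    hC.electric_comm u y x]
  ring

end IsGenCurv

lemma WeylCompatible.apply_self_right {n : ℕ} {C : Tensor4 n} {u : Fin n → ℝ}
    (hW : WeylCompatible C u) (hC : IsGenCurv C) (hu : ηf u u = -1) (x y z : Fin n → ℝ) :
    C x y z u = ηf u y * electric C u x z - ηf u x * electric C u y z := by
  have h := hW x y u z
  rw [hu, hC.2.1 y u] at h
  rw [electric, electric]
  linarith

theorem IsGenCurv.eq_kulkarniNomizu_electric {C : Tensor4 4} (hC : IsGenCurv C)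
    (htr : TotallyTraceless C) {u : Fin 4 → ℝ} (hu : ηf u u = -1) (hW : WeylCompatible C u)
    (x y z w : Fin 4 → ℝ) :
    C x y z w = kulkarniNomizu (euclideanη u) (electric C u) x y z w := by
  set K := kulkarniNomizu (euclideanη u) (electric C u)
  have hric := totallyTraceless_iff.1 htr
  have hanti₁ : ∀ x y z w, (C - K) x y z w = -(C - K) y x z w := fun x y z w => by
    simp only [Pi.sub_apply, hC.2.1 x y, K, kulkarniNomizu_swap₁₂ x y]; ring
  have hanti₂ : ∀ x y z w, (C - K) x y z w = -(C - K) x y w z := fun x y z w => by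
    simp only [Pi.sub_apply, hC.2.2.1 x y z, K, kulkarniNomizu_swap₃₄ x y z]; ring
  have hpair : ∀ x y z w, (C - K) x y z w = (C - K) z w x y := fun x y z w => by
    simp only [Pi.sub_apply, K, kulkarniNomizu_pair_comm (euclideanη_comm u) (hC.electric_comm u),
      hC.2.2.2.1 x y z w]
  have hu₄ : ∀ x y z, (C - K) x y z u = 0 := fun x y z => by
    simp only [Pi.sub_apply, K, kulkarniNomizu, hW.apply_self_right hC hu,
      euclideanη_self_right hu, hC.electric_self_right]
    ring
  have hzero := (hC.1.sub ((bilinear_euclideanη u).multilinear4_kulkarniNomizu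
    (hC.bilinear_electric u))).eq_zero_of_ricci_eq_zero hu hanti₁ hanti₂
    (fun y z w => by rw [hpair, hanti₂, hu₄, neg_zero]) hu₄
    (fun x y => by rw [ricci_sub, hric, hC.ricci_kulkarniNomizu_electric hu (hric u u)]; norm_num)
    x y z w
  exact sub_eq_zero.1 hzero

/-- a totally traceless generalized curvature tensor `C` on
Minkowski `ℝ^4`, Weyl compatible with a unit timelike `u`, is wholly determined
by its electric part `E`. -/
theorem stmt_5 (C : Tensor4 4) (hC : IsGenCurv C) (htr : TotallyTraceless C)
    (u : Fin 4 → ℝ) (hu : ηf u u = -1) (hW : WeylCompatible C u) :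
    ∀ x y z w,
      C x y z w
        = 2 * (ηf u x * ηf u w * electric C u y z
            - ηf u x * ηf u z * electric C u y w
            + ηf u y * ηf u z * electric C u x w
            - ηf u y * ηf u w * electric C u x z)
          + ηf x w * electric C u y z - ηf x z * electric C u y w
          + ηf y z * electric C u x w - ηf y w * electric C u x z := by
  intro x y z w
  rw [hC.eq_kulkarniNomizu_electric htr hu hW, kulkarniNomizu]
  simp only [euclideanη]
  ring
end
end

section
/- Let C be a totally traceless generalized curvature tensor on Minkowski space ℝ^4 and let u be a unit timelike vector such that C is Weyl compatible with u. Then C is identically zero if and only if its electric part E relative to u is identically zero. -/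
open Finset

noncomputable section

open Matrix
set_option maxHeartbeats 4000000

section Aux

private lemma lin_sum4 {T : (Fin 4 → ℝ) → ℝ} (h : IsLinearMap ℝ T) (c : Fin 4 → ℝ)
    (v : Fin 4 → (Fin 4 → ℝ)) : T (∑ a, c a • v a) = ∑ a, c a * T (v a) := by
  rw [show T = (h.mk' T : (Fin 4 → ℝ) →ₗ[ℝ] ℝ) from rfl, map_sum]
  simp [smul_eq_mul]

private lemma vec_decomp4 (x : Fin 4 → ℝ) : x = ∑ a, x a • stdb a := by
  funext i
  simp [stdb, Finset.sum_apply]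

private lemma lexp4 {T : (Fin 4 → ℝ) → ℝ} (h : IsLinearMap ℝ T) (v : Fin 4 → ℝ) :
    T v = ∑ a, v a * T (stdb a) := by
  conv_lhs => rw [vec_decomp4 v]
  exact lin_sum4 h v stdb

private lemma core_basis (R : Fin 4 → Fin 4 → Fin 4 → Fin 4 → ℝ)
    (s1 : ∀ a b c d, R a b c d = - R b a c d)
    (s2 : ∀ a b c d, R a b c d = - R a b d c)
    (s3 : ∀ a b c d, R a b c d = R c d a b)
    (z1 : ∀ b c d, R 0 b c d = 0)
    (tr : ∀ i j, R 1 i 1 j + R 2 i 2 j + R 3 i 3 j = 0) :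
    ∀ a b c d, R a b c d = 0 := by
  have z2 : ∀ a c d, R a 0 c d = 0 := fun a c d => by
    have := s1 a 0 c d; have := z1 a c d; linarith
  have z3 : ∀ a b d, R a b 0 d = 0 := fun a b d => by
    have h1 := s3 a b 0 d; have := z1 d a b; have := s2 0 d a b; linarith
  have z4 : ∀ a b c, R a b c 0 = 0 := fun a b c => by
    have := s2 a b c 0; have := z3 a b c; linarith
  have d1 : ∀ a c d, R a a c d = 0 := fun a c d => by have := s1 a a c d; linarith
  have d2 : ∀ a b c, R a b c c = 0 := fun a b c => by have := s2 a b c c; linarith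
  -- diagonal canonical components
  have e2121 := s1 2 1 2 1; have e1221 := s2 1 2 2 1
  have e3131 := s1 3 1 3 1; have e1331 := s2 1 3 3 1
  have e3232 := s1 3 2 3 2; have e2332 := s2 2 3 3 2
  have t11 := tr 1 1; have t22 := tr 2 2; have t33 := tr 3 3
  have dd1 := d1 1 1 1; have dd2 := d1 2 2 2; have dd3 := d1 3 3 3
  have K1 : R 1 2 1 2 = 0 := by linarith
  have K2 : R 1 3 1 3 = 0 := by linarith
  have K3 : R 2 3 2 3 = 0 := by linarith
  have K4 : R 1 2 1 3 = 0 := by have := tr 2 3; have := d1 2 2 3; have := d2 3 2 3; linarith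
  have K5' : R 2 1 2 3 = 0 := by have := tr 1 3; have := d1 1 1 3; have := d2 3 1 3; linarith
  have K6' : R 3 1 3 2 = 0 := by have := tr 1 2; have := d1 1 1 2; have := d2 2 1 2; linarith
  have K5 : R 1 2 2 3 = 0 := by have := s1 1 2 2 3; linarith
  have K6 : R 1 3 2 3 = 0 := by have h1 := s1 1 3 3 2; have h2 := s2 1 3 3 2; linarith
  have K7 : R 1 3 1 2 = 0 := by have := s3 1 3 1 2; linarith
  have K8 : R 2 3 1 2 = 0 := by have := s3 2 3 1 2; linarith
  have K9 : R 2 3 1 3 = 0 := by have := s3 2 3 1 3; linarith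
  have h1212 : R 1 2 1 2 = 0 := by linarith [s1 1 2 1 2, s2 1 2 1 2, s2 2 1 1 2, s1 1 2 2 1, K1, K2, K3, K4, K5, K6, K7, K8, K9]
  have h1213 : R 1 2 1 3 = 0 := by linarith [s1 1 2 1 3, s2 1 2 1 3, s2 2 1 1 3, s1 1 2 3 1, K1, K2, K3, K4, K5, K6, K7, K8, K9]
  have h1223 : R 1 2 2 3 = 0 := by linarith [s1 1 2 2 3, s2 1 2 2 3, s2 2 1 2 3, s1 1 2 3 2, K1, K2, K3, K4, K5, K6, K7, K8, K9]
  have h1221 : R 1 2 2 1 = 0 := by linarith [s1 1 2 2 1, s2 1 2 2 1, s2 2 1 2 1, s1 1 2 1 2, K1, K2, K3, K4, K5, K6, K7, K8, K9]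
  have h1231 : R 1 2 3 1 = 0 := by linarith [s1 1 2 3 1, s2 1 2 3 1, s2 2 1 3 1, s1 1 2 1 3, K1, K2, K3, K4, K5, K6, K7, K8, K9]
  have h1232 : R 1 2 3 2 = 0 := by linarith [s1 1 2 3 2, s2 1 2 3 2, s2 2 1 3 2, s1 1 2 2 3, K1, K2, K3, K4, K5, K6, K7, K8, K9]
  have h1312 : R 1 3 1 2 = 0 := by linarith [s1 1 3 1 2, s2 1 3 1 2, s2 3 1 1 2, s1 1 3 2 1, K1, K2, K3, K4, K5, K6, K7, K8, K9]
  have h1313 : R 1 3 1 3 = 0 := by linarith [s1 1 3 1 3, s2 1 3 1 3, s2 3 1 1 3, s1 1 3 3 1, K1, K2, K3, K4, K5, K6, K7, K8, K9]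
  have h1323 : R 1 3 2 3 = 0 := by linarith [s1 1 3 2 3, s2 1 3 2 3, s2 3 1 2 3, s1 1 3 3 2, K1, K2, K3, K4, K5, K6, K7, K8, K9]
  have h1321 : R 1 3 2 1 = 0 := by linarith [s1 1 3 2 1, s2 1 3 2 1, s2 3 1 2 1, s1 1 3 1 2, K1, K2, K3, K4, K5, K6, K7, K8, K9]
  have h1331 : R 1 3 3 1 = 0 := by linarith [s1 1 3 3 1, s2 1 3 3 1, s2 3 1 3 1, s1 1 3 1 3, K1, K2, K3, K4, K5, K6, K7, K8, K9]
  have h1332 : R 1 3 3 2 = 0 := by linarith [s1 1 3 3 2, s2 1 3 3 2, s2 3 1 3 2, s1 1 3 2 3, K1, K2, K3, K4, K5, K6, K7, K8, K9]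
  have h2312 : R 2 3 1 2 = 0 := by linarith [s1 2 3 1 2, s2 2 3 1 2, s2 3 2 1 2, s1 2 3 2 1, K1, K2, K3, K4, K5, K6, K7, K8, K9]
  have h2313 : R 2 3 1 3 = 0 := by linarith [s1 2 3 1 3, s2 2 3 1 3, s2 3 2 1 3, s1 2 3 3 1, K1, K2, K3, K4, K5, K6, K7, K8, K9]
  have h2323 : R 2 3 2 3 = 0 := by linarith [s1 2 3 2 3, s2 2 3 2 3, s2 3 2 2 3, s1 2 3 3 2, K1, K2, K3, K4, K5, K6, K7, K8, K9]
  have h2321 : R 2 3 2 1 = 0 := by linarith [s1 2 3 2 1, s2 2 3 2 1, s2 3 2 2 1, s1 2 3 1 2, K1, K2, K3, K4, K5, K6, K7, K8, K9]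
  have h2331 : R 2 3 3 1 = 0 := by linarith [s1 2 3 3 1, s2 2 3 3 1, s2 3 2 3 1, s1 2 3 1 3, K1, K2, K3, K4, K5, K6, K7, K8, K9]
  have h2332 : R 2 3 3 2 = 0 := by linarith [s1 2 3 3 2, s2 2 3 3 2, s2 3 2 3 2, s1 2 3 2 3, K1, K2, K3, K4, K5, K6, K7, K8, K9]
  have h2112 : R 2 1 1 2 = 0 := by linarith [s1 2 1 1 2, s2 2 1 1 2, s2 1 2 1 2, s1 2 1 2 1, K1, K2, K3, K4, K5, K6, K7, K8, K9]
  have h2113 : R 2 1 1 3 = 0 := by linarith [s1 2 1 1 3, s2 2 1 1 3, s2 1 2 1 3, s1 2 1 3 1, K1, K2, K3, K4, K5, K6, K7, K8, K9]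
  have h2123 : R 2 1 2 3 = 0 := by linarith [s1 2 1 2 3, s2 2 1 2 3, s2 1 2 2 3, s1 2 1 3 2, K1, K2, K3, K4, K5, K6, K7, K8, K9]
  have h2121 : R 2 1 2 1 = 0 := by linarith [s1 2 1 2 1, s2 2 1 2 1, s2 1 2 2 1, s1 2 1 1 2, K1, K2, K3, K4, K5, K6, K7, K8, K9]
  have h2131 : R 2 1 3 1 = 0 := by linarith [s1 2 1 3 1, s2 2 1 3 1, s2 1 2 3 1, s1 2 1 1 3, K1, K2, K3, K4, K5, K6, K7, K8, K9]
  have h2132 : R 2 1 3 2 = 0 := by linarith [s1 2 1 3 2, s2 2 1 3 2, s2 1 2 3 2, s1 2 1 2 3, K1, K2, K3, K4, K5, K6, K7, K8, K9]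
  have h3112 : R 3 1 1 2 = 0 := by linarith [s1 3 1 1 2, s2 3 1 1 2, s2 1 3 1 2, s1 3 1 2 1, K1, K2, K3, K4, K5, K6, K7, K8, K9]
  have h3113 : R 3 1 1 3 = 0 := by linarith [s1 3 1 1 3, s2 3 1 1 3, s2 1 3 1 3, s1 3 1 3 1, K1, K2, K3, K4, K5, K6, K7, K8, K9]
  have h3123 : R 3 1 2 3 = 0 := by linarith [s1 3 1 2 3, s2 3 1 2 3, s2 1 3 2 3, s1 3 1 3 2, K1, K2, K3, K4, K5, K6, K7, K8, K9]
  have h3121 : R 3 1 2 1 = 0 := by linarith [s1 3 1 2 1, s2 3 1 2 1, s2 1 3 2 1, s1 3 1 1 2, K1, K2, K3, K4, K5, K6, K7, K8, K9]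
  have h3131 : R 3 1 3 1 = 0 := by linarith [s1 3 1 3 1, s2 3 1 3 1, s2 1 3 3 1, s1 3 1 1 3, K1, K2, K3, K4, K5, K6, K7, K8, K9]
  have h3132 : R 3 1 3 2 = 0 := by linarith [s1 3 1 3 2, s2 3 1 3 2, s2 1 3 3 2, s1 3 1 2 3, K1, K2, K3, K4, K5, K6, K7, K8, K9]
  have h3212 : R 3 2 1 2 = 0 := by linarith [s1 3 2 1 2, s2 3 2 1 2, s2 2 3 1 2, s1 3 2 2 1, K1, K2, K3, K4, K5, K6, K7, K8, K9]
  have h3213 : R 3 2 1 3 = 0 := by linarith [s1 3 2 1 3, s2 3 2 1 3, s2 2 3 1 3, s1 3 2 3 1, K1, K2, K3, K4, K5, K6, K7, K8, K9]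
  have h3223 : R 3 2 2 3 = 0 := by linarith [s1 3 2 2 3, s2 3 2 2 3, s2 2 3 2 3, s1 3 2 3 2, K1, K2, K3, K4, K5, K6, K7, K8, K9]
  have h3221 : R 3 2 2 1 = 0 := by linarith [s1 3 2 2 1, s2 3 2 2 1, s2 2 3 2 1, s1 3 2 1 2, K1, K2, K3, K4, K5, K6, K7, K8, K9]
  have h3231 : R 3 2 3 1 = 0 := by linarith [s1 3 2 3 1, s2 3 2 3 1, s2 2 3 3 1, s1 3 2 1 3, K1, K2, K3, K4, K5, K6, K7, K8, K9]
  have h3232 : R 3 2 3 2 = 0 := by linarith [s1 3 2 3 2, s2 3 2 3 2, s2 2 3 3 2, s1 3 2 2 3, K1, K2, K3, K4, K5, K6, K7, K8, K9]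
  have hfin : ∀ a : Fin 4, a = 0 ∨ a = 1 ∨ a = 2 ∨ a = 3 := by decide
  intro a b c d
  rcases hfin a with rfl|rfl|rfl|rfl <;> rcases hfin b with rfl|rfl|rfl|rfl <;>
    rcases hfin c with rfl|rfl|rfl|rfl <;> rcases hfin d with rfl|rfl|rfl|rfl <;>
    first
      | exact z1 _ _ _ | exact z2 _ _ _ | exact z3 _ _ _ | exact z4 _ _ _
      | exact d1 _ _ _ | exact d2 _ _ _
      | exact h1212 | exact h1213 | exact h1223 | exact h1221 | exact h1231 | exact h1232 | exact h1312 | exact h1313 | exact h1323 | exact h1321 | exact h1331 | exact h1332 | exact h2312 | exact h2313 | exact h2323 | exact h2321 | exact h2331 | exact h2332 | exact h2112 | exact h2113 | exact h2123 | exact h2121 | exact h2131 | exact h2132 | exact h3112 | exact h3113 | exact h3123 | exact h3121 | exact h3131 | exact h3132 | exact h3212 | exact h3213 | exact h3223 | exact h3221 | exact h3231 | exact h3232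

end Aux

/-- for a totally traceless generalized curvature tensor `C` on
Minkowski `ℝ^4` that is Weyl compatible with a unit timelike `u`, `C` vanishes
identically iff its electric part relative to `u` vanishes identically. -/


theorem stmt_7 (C : Tensor4 4) (hC : IsGenCurv C) (htr : TotallyTraceless C)
    (u : Fin 4 → ℝ) (hu : ηf u u = -1) (hW : WeylCompatible C u) :
    (∀ x y z w, C x y z w = 0) ↔ (∀ x y, electric C u x y = 0) := by
  obtain ⟨⟨hl1, hl2, hl3, hl4⟩, hs1, hs2, hs3, _hb⟩ := hC
  constructor
  · intro h x y
    show C u x y u = 0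
    exact h u x y u
  intro hE
  -- Step 1 : all contractions of C with u vanish
  have h4u : ∀ x y z, C x y z u = 0 := by
    intro X Y Z
    have hw := hW u X Y Z
    have e1 : C Y u Z u = 0 := by
      have h1 := hs1 Y u Z u
      have h2 : C u Y Z u = 0 := hE Y Z
      linarith
    have e2 : C u X Z u = 0 := hE X Z
    rw [hu, e1, e2, mul_zero, mul_zero] at hw
    linarith
  have h1u : ∀ y z w, C u y z w = 0 := by
    intro Y Z W
    have h1 := hs3 u Y Z W
    have h2 := hs2 Z W u Y
    have h3 := h4u Z W Y
    linarith
  have h2u : ∀ x z w, C x u z w = 0 := by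
    intro X Z W
    have h1 := hs1 X u Z W
    have h2 := h1u X Z W
    linarith
  have h3u : ∀ x y w, C x y u w = 0 := by
    intro X Y W
    have h1 := hs2 X Y u W
    have h2 := h4u X Y W
    linarith
  -- quadratic relation for u
  have hqu : u 0 * u 0 = 1 + u 1 * u 1 + u 2 * u 2 + u 3 * u 3 := by
    have hu' := hu
    simp only [ηf, Fin.sum_univ_four, show ((0:Fin 4):ℕ) = 0 from rfl,
      show ((1:Fin 4):ℕ) = 1 from rfl, show ((2:Fin 4):ℕ) = 2 from rfl,
      show ((3:Fin 4):ℕ) = 3 from rfl] at hu'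
    norm_num at hu'
    linarith
  -- WLOG the time component of u is positive
  obtain ⟨v, hsq, hpos, g1u, g2u, g3u, g4u⟩ :
      ∃ v : Fin 4 → ℝ, (v 0 * v 0 = 1 + v 1 * v 1 + v 2 * v 2 + v 3 * v 3) ∧ 0 < v 0 ∧
        (∀ y z w, C v y z w = 0) ∧ (∀ x z w, C x v z w = 0) ∧
        (∀ x y w, C x y v w = 0) ∧ (∀ x y z, C x y z v = 0) := by
    have hune : u 0 ≠ 0 := by
      intro h
      rw [h] at hqu
      nlinarith [sq_nonneg (u 1), sq_nonneg (u 2), sq_nonneg (u 3)]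
    rcases hune.lt_or_gt with h|h
    · refine ⟨fun i => -u i, by simpa using hqu, by simpa using h, ?_, ?_, ?_, ?_⟩ <;>
        intro X Y Z <;>
        [ (have hsm : (fun i => -u i) = (-1 : ℝ) • u := by funext i; simp
           rw [hsm, (hl1 X Y Z).map_smul]
           simp [h1u]);
          (have hsm : (fun i => -u i) = (-1 : ℝ) • u := by funext i; simp
           rw [hsm, (hl2 X Y Z).map_smul]
           simp [h2u]);
          (have hsm : (fun i => -u i) = (-1 : ℝ) • u := by funext i; simp
           rw [hsm, (hl3 X Y Z).map_smul]
           simp [h3u]);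
          (have hsm : (fun i => -u i) = (-1 : ℝ) • u := by funext i; simp
           rw [hsm, (hl4 X Y Z).map_smul]
           simp [h4u])]
    · exact ⟨u, hqu, h, h1u, h2u, h3u, h4u⟩
  clear hqu hu hW hE h1u h2u h3u h4u
  have hne : (1 : ℝ) + v 0 ≠ 0 := by positivity
  -- the adapted orthonormal basis
  set f : Fin 4 → Fin 4 → ℝ :=
    ![v,
      ![v 1, 1 + v 1 * v 1 / (1 + v 0), v 2 * v 1 / (1 + v 0), v 3 * v 1 / (1 + v 0)],
      ![v 2, v 1 * v 2 / (1 + v 0), 1 + v 2 * v 2 / (1 + v 0), v 3 * v 2 / (1 + v 0)],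
      ![v 3, v 1 * v 3 / (1 + v 0), v 2 * v 3 / (1 + v 0), 1 + v 3 * v 3 / (1 + v 0)]] with hf
  have hf0 : f 0 = v := rfl
  have horth : ∀ a b, ηf (f a) (f b) = ηm a b := by
    intro a b
    fin_cases a <;> fin_cases b
    · simp only [hf, ηf, ηm, Fin.sum_univ_four, show ((0:Fin 4):ℕ) = 0 from rfl,
          show ((1:Fin 4):ℕ) = 1 from rfl, show ((2:Fin 4):ℕ) = 2 from rfl,
          show ((3:Fin 4):ℕ) = 3 from rfl]
      norm_num [Fin.ext_iff, Matrix.cons_val_two, Matrix.cons_val_three, Matrix.head_cons, Matrix.tail_cons]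
      linear_combination (norm := (first | ring1 | (field_simp; ring1))) (-1 : ℝ) * hsq
    · simp only [hf, ηf, ηm, Fin.sum_univ_four, show ((0:Fin 4):ℕ) = 0 from rfl,
          show ((1:Fin 4):ℕ) = 1 from rfl, show ((2:Fin 4):ℕ) = 2 from rfl,
          show ((3:Fin 4):ℕ) = 3 from rfl]
      norm_num [Fin.ext_iff, Matrix.cons_val_two, Matrix.cons_val_three, Matrix.head_cons, Matrix.tail_cons]
      linear_combination (norm := (first | ring1 | (field_simp; ring1))) (-(v 1)/(1+v 0)) * hsq
    · simp only [hf, ηf, ηm, Fin.sum_univ_four, show ((0:Fin 4):ℕ) = 0 from rfl,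
          show ((1:Fin 4):ℕ) = 1 from rfl, show ((2:Fin 4):ℕ) = 2 from rfl,
          show ((3:Fin 4):ℕ) = 3 from rfl]
      norm_num [Fin.ext_iff, Matrix.cons_val_two, Matrix.cons_val_three, Matrix.head_cons, Matrix.tail_cons]
      linear_combination (norm := (first | ring1 | (field_simp; ring1))) (-(v 2)/(1+v 0)) * hsq
    · simp only [hf, ηf, ηm, Fin.sum_univ_four, show ((0:Fin 4):ℕ) = 0 from rfl,
          show ((1:Fin 4):ℕ) = 1 from rfl, show ((2:Fin 4):ℕ) = 2 from rfl,
          show ((3:Fin 4):ℕ) = 3 from rfl]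
      norm_num [Fin.ext_iff, Matrix.cons_val_two, Matrix.cons_val_three, Matrix.head_cons, Matrix.tail_cons]
      linear_combination (norm := (first | ring1 | (field_simp; ring1))) (-(v 3)/(1+v 0)) * hsq
    · simp only [hf, ηf, ηm, Fin.sum_univ_four, show ((0:Fin 4):ℕ) = 0 from rfl,
          show ((1:Fin 4):ℕ) = 1 from rfl, show ((2:Fin 4):ℕ) = 2 from rfl,
          show ((3:Fin 4):ℕ) = 3 from rfl]
      norm_num [Fin.ext_iff, Matrix.cons_val_two, Matrix.cons_val_three, Matrix.head_cons, Matrix.tail_cons]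
      linear_combination (norm := (first | ring1 | (field_simp; ring1))) (-(v 1)/(1+v 0)) * hsq
    · simp only [hf, ηf, ηm, Fin.sum_univ_four, show ((0:Fin 4):ℕ) = 0 from rfl,
          show ((1:Fin 4):ℕ) = 1 from rfl, show ((2:Fin 4):ℕ) = 2 from rfl,
          show ((3:Fin 4):ℕ) = 3 from rfl]
      norm_num [Fin.ext_iff, Matrix.cons_val_two, Matrix.cons_val_three, Matrix.head_cons, Matrix.tail_cons]
      linear_combination (norm := (first | ring1 | (field_simp; ring1))) (-(v 1*v 1)/((1+v 0)*(1+v 0))) * hsq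
    · simp only [hf, ηf, ηm, Fin.sum_univ_four, show ((0:Fin 4):ℕ) = 0 from rfl,
          show ((1:Fin 4):ℕ) = 1 from rfl, show ((2:Fin 4):ℕ) = 2 from rfl,
          show ((3:Fin 4):ℕ) = 3 from rfl]
      norm_num [Fin.ext_iff, Matrix.cons_val_two, Matrix.cons_val_three, Matrix.head_cons, Matrix.tail_cons]
      linear_combination (norm := (first | ring1 | (field_simp; ring1))) (-(v 1*v 2)/((1+v 0)*(1+v 0))) * hsq
    · simp only [hf, ηf, ηm, Fin.sum_univ_four, show ((0:Fin 4):ℕ) = 0 from rfl,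
          show ((1:Fin 4):ℕ) = 1 from rfl, show ((2:Fin 4):ℕ) = 2 from rfl,
          show ((3:Fin 4):ℕ) = 3 from rfl]
      norm_num [Fin.ext_iff, Matrix.cons_val_two, Matrix.cons_val_three, Matrix.head_cons, Matrix.tail_cons]
      linear_combination (norm := (first | ring1 | (field_simp; ring1))) (-(v 1*v 3)/((1+v 0)*(1+v 0))) * hsq
    · simp only [hf, ηf, ηm, Fin.sum_univ_four, show ((0:Fin 4):ℕ) = 0 from rfl,
          show ((1:Fin 4):ℕ) = 1 from rfl, show ((2:Fin 4):ℕ) = 2 from rfl,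
          show ((3:Fin 4):ℕ) = 3 from rfl]
      norm_num [Fin.ext_iff, Matrix.cons_val_two, Matrix.cons_val_three, Matrix.head_cons, Matrix.tail_cons]
      linear_combination (norm := (first | ring1 | (field_simp; ring1))) (-(v 2)/(1+v 0)) * hsq
    · simp only [hf, ηf, ηm, Fin.sum_univ_four, show ((0:Fin 4):ℕ) = 0 from rfl,
          show ((1:Fin 4):ℕ) = 1 from rfl, show ((2:Fin 4):ℕ) = 2 from rfl,
          show ((3:Fin 4):ℕ) = 3 from rfl]
      norm_num [Fin.ext_iff, Matrix.cons_val_two, Matrix.cons_val_three, Matrix.head_cons, Matrix.tail_cons]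
      linear_combination (norm := (first | ring1 | (field_simp; ring1))) (-(v 2*v 1)/((1+v 0)*(1+v 0))) * hsq
    · simp only [hf, ηf, ηm, Fin.sum_univ_four, show ((0:Fin 4):ℕ) = 0 from rfl,
          show ((1:Fin 4):ℕ) = 1 from rfl, show ((2:Fin 4):ℕ) = 2 from rfl,
          show ((3:Fin 4):ℕ) = 3 from rfl]
      norm_num [Fin.ext_iff, Matrix.cons_val_two, Matrix.cons_val_three, Matrix.head_cons, Matrix.tail_cons]
      linear_combination (norm := (first | ring1 | (field_simp; ring1))) (-(v 2*v 2)/((1+v 0)*(1+v 0))) * hsq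
    · simp only [hf, ηf, ηm, Fin.sum_univ_four, show ((0:Fin 4):ℕ) = 0 from rfl,
          show ((1:Fin 4):ℕ) = 1 from rfl, show ((2:Fin 4):ℕ) = 2 from rfl,
          show ((3:Fin 4):ℕ) = 3 from rfl]
      norm_num [Fin.ext_iff, Matrix.cons_val_two, Matrix.cons_val_three, Matrix.head_cons, Matrix.tail_cons]
      linear_combination (norm := (first | ring1 | (field_simp; ring1))) (-(v 2*v 3)/((1+v 0)*(1+v 0))) * hsq
    · simp only [hf, ηf, ηm, Fin.sum_univ_four, show ((0:Fin 4):ℕ) = 0 from rfl,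
          show ((1:Fin 4):ℕ) = 1 from rfl, show ((2:Fin 4):ℕ) = 2 from rfl,
          show ((3:Fin 4):ℕ) = 3 from rfl]
      norm_num [Fin.ext_iff, Matrix.cons_val_two, Matrix.cons_val_three, Matrix.head_cons, Matrix.tail_cons]
      linear_combination (norm := (first | ring1 | (field_simp; ring1))) (-(v 3)/(1+v 0)) * hsq
    · simp only [hf, ηf, ηm, Fin.sum_univ_four, show ((0:Fin 4):ℕ) = 0 from rfl,
          show ((1:Fin 4):ℕ) = 1 from rfl, show ((2:Fin 4):ℕ) = 2 from rfl,
          show ((3:Fin 4):ℕ) = 3 from rfl]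
      norm_num [Fin.ext_iff, Matrix.cons_val_two, Matrix.cons_val_three, Matrix.head_cons, Matrix.tail_cons]
      linear_combination (norm := (first | ring1 | (field_simp; ring1))) (-(v 3*v 1)/((1+v 0)*(1+v 0))) * hsq
    · simp only [hf, ηf, ηm, Fin.sum_univ_four, show ((0:Fin 4):ℕ) = 0 from rfl,
          show ((1:Fin 4):ℕ) = 1 from rfl, show ((2:Fin 4):ℕ) = 2 from rfl,
          show ((3:Fin 4):ℕ) = 3 from rfl]
      norm_num [Fin.ext_iff, Matrix.cons_val_two, Matrix.cons_val_three, Matrix.head_cons, Matrix.tail_cons]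
      linear_combination (norm := (first | ring1 | (field_simp; ring1))) (-(v 3*v 2)/((1+v 0)*(1+v 0))) * hsq
    · simp only [hf, ηf, ηm, Fin.sum_univ_four, show ((0:Fin 4):ℕ) = 0 from rfl,
          show ((1:Fin 4):ℕ) = 1 from rfl, show ((2:Fin 4):ℕ) = 2 from rfl,
          show ((3:Fin 4):ℕ) = 3 from rfl]
      norm_num [Fin.ext_iff, Matrix.cons_val_two, Matrix.cons_val_three, Matrix.head_cons, Matrix.tail_cons]
      linear_combination (norm := (first | ring1 | (field_simp; ring1))) (-(v 3*v 3)/((1+v 0)*(1+v 0))) * hsq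
  -- matrix identities
  set E : Matrix (Fin 4) (Fin 4) ℝ := Matrix.of (fun i j => ηm i j) with hE
  set Fm : Matrix (Fin 4) (Fin 4) ℝ := Matrix.of (fun a i => f a i) with hFm
  have hE2 : E * E = 1 := by
    ext i j
    fin_cases i <;> fin_cases j <;>
      simp [hE, ηm, Matrix.mul_apply, Fin.sum_univ_four, Matrix.one_apply]
  have horthM : Fm * E * Fmᵀ = E := by
    ext a b
    have h := horth a b
    simp only [ηf, ηm, Fin.ext_iff, Fin.sum_univ_four, show ((0:Fin 4):ℕ) = 0 from rfl,
      show ((1:Fin 4):ℕ) = 1 from rfl, show ((2:Fin 4):ℕ) = 2 from rfl,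
      show ((3:Fin 4):ℕ) = 3 from rfl] at h
    norm_num at h
    simp only [hE, hFm, Matrix.mul_apply, Matrix.transpose_apply, Matrix.of_apply,
      Fin.sum_univ_four, ηm, Fin.ext_iff, show ((0:Fin 4):ℕ) = 0 from rfl,
      show ((1:Fin 4):ℕ) = 1 from rfl, show ((2:Fin 4):ℕ) = 2 from rfl,
      show ((3:Fin 4):ℕ) = 3 from rfl]
    norm_num
    linarith [h]
  have hcomplM : Fmᵀ * E * Fm = E := by
    have h1 : Fm * (E * Fmᵀ * E) = 1 := by
      calc Fm * (E * Fmᵀ * E) = (Fm * E * Fmᵀ) * E := by noncomm_ring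
        _ = E * E := by rw [horthM]
        _ = 1 := hE2
    have h2 : (E * Fmᵀ * E) * Fm = 1 := mul_eq_one_comm.mp h1
    calc Fmᵀ * E * Fm = (E * E) * (Fmᵀ * E * Fm) := by rw [hE2]; noncomm_ring
      _ = E * ((E * Fmᵀ * E) * Fm) := by noncomm_ring
      _ = E * 1 := by rw [h2]
      _ = E := by simp
  have hcompl : ∀ i j, (∑ a, ∑ b, ηm a b * f a i * f b j) = ηm i j := by
    intro i j
    have h := Matrix.ext_iff.mpr hcomplM i j
    simp only [hE, hFm, Matrix.mul_apply, Matrix.transpose_apply, Matrix.of_apply,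
      Fin.sum_univ_four] at h
    simp only [Fin.sum_univ_four]
    simp only [ηm, Fin.ext_iff, show ((0:Fin 4):ℕ) = 0 from rfl,
      show ((1:Fin 4):ℕ) = 1 from rfl, show ((2:Fin 4):ℕ) = 2 from rfl,
      show ((3:Fin 4):ℕ) = 3 from rfl] at h ⊢
    norm_num at h ⊢
    linarith [h]
  have hspan : ∀ x : Fin 4 → ℝ,
      x = ∑ a, (∑ b, ηm a b * ηf (f b) x) • f a := by
    intro x
    funext i
    rw [Finset.sum_apply]
    simp only [Pi.smul_apply, smul_eq_mul, ηf, ηm, Fin.ext_iff, Fin.sum_univ_four,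
      show ((0:Fin 4):ℕ) = 0 from rfl, show ((1:Fin 4):ℕ) = 1 from rfl,
      show ((2:Fin 4):ℕ) = 2 from rfl, show ((3:Fin 4):ℕ) = 3 from rfl]
    norm_num
    fin_cases i
    · have H0 := hcompl 0 0
      have H1 := hcompl 0 1
      have H2 := hcompl 0 2
      have H3 := hcompl 0 3
      simp only [Fin.sum_univ_four, ηm, Fin.ext_iff, show ((0:Fin 4):ℕ) = 0 from rfl,
        show ((1:Fin 4):ℕ) = 1 from rfl, show ((2:Fin 4):ℕ) = 2 from rfl,
        show ((3:Fin 4):ℕ) = 3 from rfl] at H0 H1 H2 H3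
      norm_num at H0 H1 H2 H3
      simp only [Fin.zero_eta, Fin.mk_one, Fin.reduceFinMk]
      linear_combination x 0 * H0 - x 1 * H1 - x 2 * H2 - x 3 * H3
    · have H0 := hcompl 1 0
      have H1 := hcompl 1 1
      have H2 := hcompl 1 2
      have H3 := hcompl 1 3
      simp only [Fin.sum_univ_four, ηm, Fin.ext_iff, show ((0:Fin 4):ℕ) = 0 from rfl,
        show ((1:Fin 4):ℕ) = 1 from rfl, show ((2:Fin 4):ℕ) = 2 from rfl,
        show ((3:Fin 4):ℕ) = 3 from rfl] at H0 H1 H2 H3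
      norm_num at H0 H1 H2 H3
      simp only [Fin.zero_eta, Fin.mk_one, Fin.reduceFinMk]
      linear_combination x 0 * H0 - x 1 * H1 - x 2 * H2 - x 3 * H3
    · have H0 := hcompl 2 0
      have H1 := hcompl 2 1
      have H2 := hcompl 2 2
      have H3 := hcompl 2 3
      simp only [Fin.sum_univ_four, ηm, Fin.ext_iff, show ((0:Fin 4):ℕ) = 0 from rfl,
        show ((1:Fin 4):ℕ) = 1 from rfl, show ((2:Fin 4):ℕ) = 2 from rfl,
        show ((3:Fin 4):ℕ) = 3 from rfl] at H0 H1 H2 H3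
      norm_num at H0 H1 H2 H3
      simp only [Fin.zero_eta, Fin.mk_one, Fin.reduceFinMk]
      linear_combination x 0 * H0 - x 1 * H1 - x 2 * H2 - x 3 * H3
    · have H0 := hcompl 3 0
      have H1 := hcompl 3 1
      have H2 := hcompl 3 2
      have H3 := hcompl 3 3
      simp only [Fin.sum_univ_four, ηm, Fin.ext_iff, show ((0:Fin 4):ℕ) = 0 from rfl,
        show ((1:Fin 4):ℕ) = 1 from rfl, show ((2:Fin 4):ℕ) = 2 from rfl,
        show ((3:Fin 4):ℕ) = 3 from rfl] at H0 H1 H2 H3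
      norm_num at H0 H1 H2 H3
      simp only [Fin.zero_eta, Fin.mk_one, Fin.reduceFinMk]
      linear_combination x 0 * H0 - x 1 * H1 - x 2 * H2 - x 3 * H3
  -- expansion of C in slots 1 and 3
  have l13 : ∀ x y vv ww, C vv x ww y = ∑ m, ∑ n, vv m * ww n * C (stdb m) x (stdb n) y := by
    intro x y vv ww
    rw [lexp4 (hl1 x ww y) vv]
    refine Finset.sum_congr rfl fun m _ => ?_
    rw [lexp4 (hl3 (stdb m) x y) ww, Finset.mul_sum]
    exact Finset.sum_congr rfl fun n _ => by ring
  -- transported tracelessness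
  have trace_f : ∀ x y, (∑ a, ∑ b, ηm a b * C (f a) x (f b) y) = 0 := by
    intro x y
    have ht := htr x y
    have step : (∑ a, ∑ b, ηm a b * C (f a) x (f b) y)
        = ∑ a, ∑ b, ηm a b * (∑ m, ∑ n, f a m * f b n * C (stdb m) x (stdb n) y) :=
      Finset.sum_congr rfl fun a _ => Finset.sum_congr rfl fun b _ => by
        rw [l13 x y (f a) (f b)]
    rw [step]
    have H00 := hcompl 0 0
    have H01 := hcompl 0 1
    have H02 := hcompl 0 2
    have H03 := hcompl 0 3
    have H10 := hcompl 1 0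
    have H11 := hcompl 1 1
    have H12 := hcompl 1 2
    have H13 := hcompl 1 3
    have H20 := hcompl 2 0
    have H21 := hcompl 2 1
    have H22 := hcompl 2 2
    have H23 := hcompl 2 3
    have H30 := hcompl 3 0
    have H31 := hcompl 3 1
    have H32 := hcompl 3 2
    have H33 := hcompl 3 3
    simp only [Fin.sum_univ_four, ηm, Fin.ext_iff, show ((0:Fin 4):ℕ) = 0 from rfl,
      show ((1:Fin 4):ℕ) = 1 from rfl, show ((2:Fin 4):ℕ) = 2 from rfl,
      show ((3:Fin 4):ℕ) = 3 from rfl] at H00 H01 H02 H03 H10 H11 H12 H13 H20 H21 H22 H23 H30 H31 H32 H33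
    norm_num at H00 H01 H02 H03 H10 H11 H12 H13 H20 H21 H22 H23 H30 H31 H32 H33
    simp only [Fin.sum_univ_four, ηm, Fin.ext_iff, show ((0:Fin 4):ℕ) = 0 from rfl,
      show ((1:Fin 4):ℕ) = 1 from rfl, show ((2:Fin 4):ℕ) = 2 from rfl,
      show ((3:Fin 4):ℕ) = 3 from rfl] at ht ⊢
    norm_num at ht ⊢
    linear_combination (C (stdb 0) x (stdb 0) y) * H00 + (C (stdb 0) x (stdb 1) y) * H01 + (C (stdb 0) x (stdb 2) y) * H02 + (C (stdb 0) x (stdb 3) y) * H03 + (C (stdb 1) x (stdb 0) y) * H10 + (C (stdb 1) x (stdb 1) y) * H11 + (C (stdb 1) x (stdb 2) y) * H12 + (C (stdb 1) x (stdb 3) y) * H13 + (C (stdb 2) x (stdb 0) y) * H20 + (C (stdb 2) x (stdb 1) y) * H21 + (C (stdb 2) x (stdb 2) y) * H22 + (C (stdb 2) x (stdb 3) y) * H23 + (C (stdb 3) x (stdb 0) y) * H30 + (C (stdb 3) x (stdb 1) y) * H31 + (C (stdb 3) x (stdb 2) y) * H32 + (C (stdb 3) x (stdb 3) y) * H33 +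 ht
  -- the components of C in the adapted basis vanish
  have key : ∀ a b c d, C (f a) (f b) (f c) (f d) = 0 := by
    have := core_basis (fun a b c d => C (f a) (f b) (f c) (f d))
      (fun a b c d => hs1 (f a) (f b) (f c) (f d))
      (fun a b c d => hs2 (f a) (f b) (f c) (f d))
      (fun a b c d => hs3 (f a) (f b) (f c) (f d))
      (fun b c d => by simp only [hf0]; exact g1u (f b) (f c) (f d))
      ?_
    · exact this
    intro i j
    have ht := trace_f (f i) (f j)
    simp only [Fin.sum_univ_four, ηm, Fin.ext_iff, show ((0:Fin 4):ℕ) = 0 from rfl,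
      show ((1:Fin 4):ℕ) = 1 from rfl, show ((2:Fin 4):ℕ) = 2 from rfl,
      show ((3:Fin 4):ℕ) = 3 from rfl] at ht
    norm_num at ht
    have hz : C (f 0) (f i) (f 0) (f j) = 0 := by
      rw [hf0]; exact g1u (f i) (f 0) (f j)
    linarith
  -- reconstruction of C from its components
  have A4 : ∀ a b c w, C (f a) (f b) (f c) w = 0 := by
    intro a b c w
    conv_lhs => rw [hspan w]
    rw [lin_sum4 (hl4 (f a) (f b) (f c)) _ f]
    simp [key]
  have A3 : ∀ a b z w, C (f a) (f b) z w = 0 := by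
    intro a b z w
    conv_lhs => rw [hspan z]
    rw [lin_sum4 (hl3 (f a) (f b) w) _ f]
    simp [A4]
  have A2 : ∀ a y z w, C (f a) y z w = 0 := by
    intro a y z w
    conv_lhs => rw [hspan y]
    rw [lin_sum4 (hl2 (f a) z w) _ f]
    simp [A3]
  intro x y z w
  conv_lhs => rw [hspan x]
  rw [lin_sum4 (hl1 y z w) _ f]
  simp [A2]
end
end

section
/- Let u be a unit timelike vector in Minkowski space ℝ^n and let T : (ℝ^n)^4 → ℝ be a multilinear map all of whose contractions with u vanish, i.e. T(u,y,z,w) = T(x,u,z,w) = T(x,y,u,w) = T(x,y,z,u) = 0 for all x,y,z,w. Then the full η-self-contraction of T is nonnegative: T² = Σ T_{abcd} T^{abcd} ≥ 0. -/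
open Finset

noncomputable section

namespace Stmt13

variable {n : ℕ}

lemma lin_expand (L : (Fin n → ℝ) → ℝ) (hL : IsLinearMap ℝ L) (x : Fin n → ℝ) :
    L x = ∑ a, x a * L (stdb a) := by
  have hx : (∑ a, x a • stdb a) = x := by
    funext i
    simp [stdb, Finset.sum_apply, mul_ite]
  calc L x = L (∑ a, x a • stdb a) := by rw [hx]
    _ = ∑ a, x a * L (stdb a) := by
        rw [show L = ⇑(IsLinearMap.mk' L hL) from rfl, map_sum]
        exact Finset.sum_congr rfl fun a _ => by rw [map_smul]; rfl

def pr (N F : Fin n → Fin n → ℝ) : ℝ := ∑ a, ∑ a', N a a' * F a a'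

lemma pr_congr {N F G : Fin n → Fin n → ℝ} (h : ∀ a a', F a a' = G a a') :
    pr N F = pr N G :=
  Finset.sum_congr rfl fun a _ => Finset.sum_congr rfl fun a' _ => by rw [h]

lemma pr_sum {ι : Type*} (s : Finset ι) (N : Fin n → Fin n → ℝ)
    (G : ι → Fin n → Fin n → ℝ) :
    pr N (fun a a' => ∑ x ∈ s, G x a a') = ∑ x ∈ s, pr N (fun a a' => G x a a') := by
  unfold pr
  calc (∑ a, ∑ a', N a a' * ∑ x ∈ s, G x a a')
      = ∑ a, ∑ a', ∑ x ∈ s, N a a' * G x a a' :=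
        sum_congr rfl fun a _ => sum_congr rfl fun a' _ => Finset.mul_sum _ _ _
    _ = ∑ a, ∑ x ∈ s, ∑ a', N a a' * G x a a' :=
        sum_congr rfl fun a _ => Finset.sum_comm
    _ = ∑ x ∈ s, ∑ a, ∑ a', N a a' * G x a a' := Finset.sum_comm

lemma sum_mul_pr (v : Fin n → ℝ) (N : Fin n → Fin n → ℝ)
    (G : Fin n → Fin n → Fin n → ℝ) :
    (∑ x, v x * pr N (fun p q => G x p q)) = pr N (fun p q => ∑ x, v x * G x p q) := by
  unfold pr
  calc (∑ x, v x * ∑ p, ∑ q, N p q * G x p q)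
      = ∑ x, ∑ p, ∑ q, v x * (N p q * G x p q) := by
        refine sum_congr rfl fun x _ => ?_
        rw [Finset.mul_sum]
        exact sum_congr rfl fun p _ => Finset.mul_sum _ _ _
    _ = ∑ p, ∑ x, ∑ q, v x * (N p q * G x p q) := Finset.sum_comm
    _ = ∑ p, ∑ q, ∑ x, v x * (N p q * G x p q) :=
        sum_congr rfl fun p _ => Finset.sum_comm
    _ = ∑ p, ∑ q, N p q * ∑ x, v x * G x p q := by
        refine sum_congr rfl fun p _ => sum_congr rfl fun q _ => ?_
        rw [Finset.mul_sum]
        exact sum_congr rfl fun x _ => by ring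

lemma pr_repl (v : Fin n → ℝ) {N : Fin n → Fin n → ℝ}
    (hN : ∀ a a', N a a' = ηm a a' + v a * v a') (F : Fin n → Fin n → ℝ)
    (h : ∀ a', (∑ a, v a * F a a') = 0) :
    pr ηm F = pr N F := by
  unfold pr
  have key : ∀ a', ∑ a, v a * v a' * F a a' = 0 := by
    intro a'
    calc ∑ a, v a * v a' * F a a' = v a' * ∑ a, v a * F a a' := by
          rw [Finset.mul_sum]; exact sum_congr rfl fun a _ => by ring
      _ = 0 := by rw [h a', mul_zero]
  have expand : ∑ a, ∑ a', N a a' * F a a'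
      = (∑ a, ∑ a', ηm a a' * F a a') + ∑ a, ∑ a', v a * v a' * F a a' := by
    rw [← Finset.sum_add_distrib]
    refine sum_congr rfl fun a _ => ?_
    rw [← Finset.sum_add_distrib]
    exact sum_congr rfl fun a' _ => by rw [hN]; ring
  have zero : (∑ a, ∑ a', v a * v a' * F a a') = 0 := by
    rw [Finset.sum_comm]
    exact Finset.sum_eq_zero fun a' _ => key a'
  rw [expand, zero, add_zero]

lemma pr_sq {N : Fin n → Fin n → ℝ} (B : Fin n → Fin n → ℝ)
    (hN : ∀ a a', N a a' = ∑ k, B k a * B k a') (f g : Fin n → ℝ) :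
    pr N (fun a a' => f a * g a') = ∑ k, (∑ a, B k a * f a) * (∑ a', B k a' * g a') := by
  unfold pr
  calc ∑ a, ∑ a', N a a' * (f a * g a')
      = ∑ a, ∑ a', ∑ k, (B k a * f a) * (B k a' * g a') := by
        refine sum_congr rfl fun a _ => sum_congr rfl fun a' _ => ?_
        rw [hN, Finset.sum_mul]
        exact sum_congr rfl fun k _ => by ring
    _ = ∑ a, ∑ k, ∑ a', (B k a * f a) * (B k a' * g a') :=
        sum_congr rfl fun a _ => Finset.sum_comm
    _ = ∑ k, ∑ a, ∑ a', (B k a * f a) * (B k a' * g a') := Finset.sum_comm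
    _ = ∑ k, (∑ a, B k a * f a) * (∑ a', B k a' * g a') := by
        refine sum_congr rfl fun k _ => ?_
        rw [Finset.sum_mul_sum]

theorem main_aux (v : Fin n → ℝ)
    (hB' : ∃ B : Fin n → Fin n → ℝ,
      ∀ a a', ηm a a' + v a * v a' = ∑ k, B k a * B k a')
    (t : Fin n → Fin n → Fin n → Fin n → ℝ)
    (hA : ∀ b c d, (∑ a, v a * t a b c d) = 0)
    (hB : ∀ a c d, (∑ b, v b * t a b c d) = 0)
    (hC : ∀ a b d, (∑ c, v c * t a b c d) = 0)
    (hD : ∀ a b c, (∑ d, v d * t a b c d) = 0) :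
    0 ≤ ∑ a, ∑ a', ∑ b, ∑ b', ∑ c, ∑ c', ∑ d, ∑ d',
      ηm a a' * ηm b b' * ηm c c' * ηm d d' * t a b c d * t a' b' c' d' := by
  obtain ⟨B, hM⟩ := hB'
  set N : Fin n → Fin n → ℝ := fun a a' => ηm a a' + v a * v a' with hNdef
  have hN : ∀ a a', N a a' = ηm a a' + v a * v a' := fun _ _ => rfl
  have hNB : ∀ a a', N a a' = ∑ k, B k a * B k a' := fun a a' => hM a a'
  have e0 : (∑ a, ∑ a', ∑ b, ∑ b', ∑ c, ∑ c', ∑ d, ∑ d',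
        ηm a a' * ηm b b' * ηm c c' * ηm d d' * t a b c d * t a' b' c' d')
      = pr ηm (fun a a' => pr ηm (fun b b' => pr ηm (fun c c' =>
          pr ηm (fun d d' => t a b c d * t a' b' c' d')))) := by
    simp only [pr, Finset.mul_sum]
    exact sum_congr rfl fun a _ => sum_congr rfl fun a' _ => sum_congr rfl fun b _ =>
      sum_congr rfl fun b' _ => sum_congr rfl fun c _ => sum_congr rfl fun c' _ =>
      sum_congr rfl fun d _ => sum_congr rfl fun d' _ => by ring
  rw [e0]
  have r4 : ∀ a b c a' b' c',
      pr ηm (fun d d' => t a b c d * t a' b' c' d')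
        = pr N (fun d d' => t a b c d * t a' b' c' d') := by
    intro a b c a' b' c'
    refine pr_repl v hN _ fun d' => ?_
    calc (∑ d, v d * (t a b c d * t a' b' c' d'))
        = (∑ d, v d * t a b c d) * t a' b' c' d' := by
          rw [Finset.sum_mul]; exact sum_congr rfl fun d _ => by ring
      _ = 0 := by rw [hD a b c, zero_mul]
  have r3 : ∀ a b a' b',
      pr ηm (fun c c' => pr N (fun d d' => t a b c d * t a' b' c' d'))
        = pr N (fun c c' => pr N (fun d d' => t a b c d * t a' b' c' d')) := by
    intro a b a' b'
    refine pr_repl v hN _ fun c' => ?_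
    rw [sum_mul_pr v N (fun x d d' => t a b x d * t a' b' c' d')]
    have hz : ∀ d d', (∑ x, v x * (t a b x d * t a' b' c' d')) = 0 := by
      intro d d'
      calc (∑ x, v x * (t a b x d * t a' b' c' d'))
          = (∑ x, v x * t a b x d) * t a' b' c' d' := by
            rw [Finset.sum_mul]; exact sum_congr rfl fun x _ => by ring
        _ = 0 := by rw [hC a b d, zero_mul]
    rw [pr_congr hz]
    simp [pr]
  have r2 : ∀ a a',
      pr ηm (fun b b' => pr N (fun c c' => pr N (fun d d' => t a b c d * t a' b' c' d')))
        = pr N (fun b b' => pr N (fun c c' => pr N (fun d d' => t a b c d * t a' b' c' d'))) := by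
    intro a a'
    refine pr_repl v hN _ fun b' => ?_
    rw [sum_mul_pr v N (fun x c c' => pr N (fun d d' => t a x c d * t a' b' c' d'))]
    have hz2 : ∀ c c', (∑ x, v x * pr N (fun d d' => t a x c d * t a' b' c' d')) = 0 := by
      intro c c'
      rw [sum_mul_pr v N (fun x d d' => t a x c d * t a' b' c' d')]
      have hz : ∀ d d', (∑ x, v x * (t a x c d * t a' b' c' d')) = 0 := by
        intro d d'
        calc (∑ x, v x * (t a x c d * t a' b' c' d'))
            = (∑ x, v x * t a x c d) * t a' b' c' d' := by
              rw [Finset.sum_mul]; exact sum_congr rfl fun x _ => by ring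
          _ = 0 := by rw [hB a c d, zero_mul]
      rw [pr_congr hz]
      simp [pr]
    rw [pr_congr hz2]
    simp [pr]
  have r1 :
      pr ηm (fun a a' => pr N (fun b b' => pr N (fun c c' =>
          pr N (fun d d' => t a b c d * t a' b' c' d'))))
        = pr N (fun a a' => pr N (fun b b' => pr N (fun c c' =>
          pr N (fun d d' => t a b c d * t a' b' c' d')))) := by
    refine pr_repl v hN _ fun a' => ?_
    rw [sum_mul_pr v N (fun x b b' => pr N (fun c c' =>
      pr N (fun d d' => t x b c d * t a' b' c' d')))]
    have hz3 : ∀ b b', (∑ x, v x * pr N (fun c c' =>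
        pr N (fun d d' => t x b c d * t a' b' c' d'))) = 0 := by
      intro b b'
      rw [sum_mul_pr v N (fun x c c' => pr N (fun d d' => t x b c d * t a' b' c' d'))]
      have hz2 : ∀ c c', (∑ x, v x * pr N (fun d d' => t x b c d * t a' b' c' d')) = 0 := by
        intro c c'
        rw [sum_mul_pr v N (fun x d d' => t x b c d * t a' b' c' d')]
        have hz : ∀ d d', (∑ x, v x * (t x b c d * t a' b' c' d')) = 0 := by
          intro d d'
          calc (∑ x, v x * (t x b c d * t a' b' c' d'))
              = (∑ x, v x * t x b c d) * t a' b' c' d' := by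
                rw [Finset.sum_mul]; exact sum_congr rfl fun x _ => by ring
            _ = 0 := by rw [hA b c d, zero_mul]
        rw [pr_congr hz]
        simp [pr]
      rw [pr_congr hz2]
      simp [pr]
    rw [pr_congr hz3]
    simp [pr]
  simp only [r4]
  simp only [r3]
  simp only [r2]
  rw [r1]
  -- evaluation via B
  have s4 : ∀ a b c a' b' c',
      pr N (fun d d' => t a b c d * t a' b' c' d')
        = ∑ p, (∑ d, B p d * t a b c d) * (∑ d', B p d' * t a' b' c' d') :=
    fun a b c a' b' c' =>
      pr_sq B hNB (fun d => t a b c d) (fun d' => t a' b' c' d')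
  have s3 : ∀ a b a' b',
      pr N (fun c c' => ∑ p, (∑ d, B p d * t a b c d) * (∑ d', B p d' * t a' b' c' d'))
        = ∑ p, ∑ q, (∑ c, B q c * ∑ d, B p d * t a b c d)
            * (∑ c', B q c' * ∑ d', B p d' * t a' b' c' d') := by
    intro a b a' b'
    rw [pr_sum univ N (fun p c c' =>
      (∑ d, B p d * t a b c d) * (∑ d', B p d' * t a' b' c' d'))]
    exact sum_congr rfl fun p _ =>
      pr_sq B hNB (fun c => ∑ d, B p d * t a b c d) (fun c' => ∑ d', B p d' * t a' b' c' d')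
  have s2 : ∀ a a',
      pr N (fun b b' => ∑ p, ∑ q, (∑ c, B q c * ∑ d, B p d * t a b c d)
            * (∑ c', B q c' * ∑ d', B p d' * t a' b' c' d'))
        = ∑ p, ∑ q, ∑ r, (∑ b, B r b * ∑ c, B q c * ∑ d, B p d * t a b c d)
            * (∑ b', B r b' * ∑ c', B q c' * ∑ d', B p d' * t a' b' c' d') := by
    intro a a'
    rw [pr_sum univ N (fun p b b' => ∑ q, (∑ c, B q c * ∑ d, B p d * t a b c d)
      * (∑ c', B q c' * ∑ d', B p d' * t a' b' c' d'))]
    refine sum_congr rfl fun p _ => ?_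
    rw [pr_sum univ N (fun q b b' => (∑ c, B q c * ∑ d, B p d * t a b c d)
      * (∑ c', B q c' * ∑ d', B p d' * t a' b' c' d'))]
    exact sum_congr rfl fun q _ =>
      pr_sq B hNB (fun b => ∑ c, B q c * ∑ d, B p d * t a b c d)
        (fun b' => ∑ c', B q c' * ∑ d', B p d' * t a' b' c' d')
  have s1 :
      pr N (fun a a' => ∑ p, ∑ q, ∑ r, (∑ b, B r b * ∑ c, B q c * ∑ d, B p d * t a b c d)
            * (∑ b', B r b' * ∑ c', B q c' * ∑ d', B p d' * t a' b' c' d'))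
        = ∑ p, ∑ q, ∑ r, ∑ k, (∑ a, B k a * ∑ b, B r b * ∑ c, B q c * ∑ d, B p d * t a b c d)
            * (∑ a', B k a' * ∑ b', B r b' * ∑ c', B q c' * ∑ d', B p d' * t a' b' c' d') := by
    rw [pr_sum univ N (fun p a a' => ∑ q, ∑ r,
      (∑ b, B r b * ∑ c, B q c * ∑ d, B p d * t a b c d)
      * (∑ b', B r b' * ∑ c', B q c' * ∑ d', B p d' * t a' b' c' d'))]
    refine sum_congr rfl fun p _ => ?_
    rw [pr_sum univ N (fun q a a' => ∑ r,
      (∑ b, B r b * ∑ c, B q c * ∑ d, B p d * t a b c d)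
      * (∑ b', B r b' * ∑ c', B q c' * ∑ d', B p d' * t a' b' c' d'))]
    refine sum_congr rfl fun q _ => ?_
    rw [pr_sum univ N (fun r a a' =>
      (∑ b, B r b * ∑ c, B q c * ∑ d, B p d * t a b c d)
      * (∑ b', B r b' * ∑ c', B q c' * ∑ d', B p d' * t a' b' c' d'))]
    exact sum_congr rfl fun r _ =>
      pr_sq B hNB (fun a => ∑ b, B r b * ∑ c, B q c * ∑ d, B p d * t a b c d)
        (fun a' => ∑ b', B r b' * ∑ c', B q c' * ∑ d', B p d' * t a' b' c' d')
  simp only [s4]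
  simp only [s3]
  simp only [s2]
  rw [s1]
  refine sum_nonneg fun p _ => sum_nonneg fun q _ => sum_nonneg fun r _ =>
    sum_nonneg fun k _ => mul_self_nonneg _


lemma M_psd (v : Fin n → ℝ)
    (hv : (∑ i : Fin n, (if (i : ℕ) = 0 then (-1 : ℝ) else 1) * v i * v i) = -1) :
    ∃ B : Fin n → Fin n → ℝ, ∀ a a', ηm a a' + v a * v a' = ∑ k, B k a * B k a' := by
  have hn : 0 < n := by
    rcases Nat.eq_zero_or_pos n with h | h
    · exfalso; subst h; simp at hv
    · exact h
  set z : Fin n := ⟨0, hn⟩ with hz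
  have hsplit : ∀ w : Fin n → ℝ,
      (∑ a : Fin n, (if (a : ℕ) = 0 then (-1:ℝ) else 1) * w a * w a)
        = (∑ a ∈ univ.erase z, w a * w a) + (-1) * w z * w z := by
    intro w
    rw [← Finset.sum_erase_add univ _ (mem_univ z)]
    have h1 : ∀ a ∈ univ.erase z,
        (if (a : ℕ) = 0 then (-1:ℝ) else 1) * w a * w a = w a * w a := by
      intro a ha
      have hne : (a : ℕ) ≠ 0 := by
        intro h
        exact (Finset.mem_erase.mp ha).1 (Fin.ext h)
      rw [if_neg hne, one_mul]
    rw [sum_congr rfl h1]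
    have h2 : ((z : Fin n) : ℕ) = 0 := rfl
    rw [if_pos h2]
  set M : Matrix (Fin n) (Fin n) ℝ := Matrix.of fun a a' => ηm a a' + v a * v a' with hMdef
  have hsd : M.PosSemidef := by
    rw [Matrix.posSemidef_iff_dotProduct_mulVec]
    constructor
    · ext a a'
      simp only [Matrix.conjTranspose_apply, Matrix.of_apply, star_trivial, hMdef]
      have : ηm a' a = ηm a a' := by
        unfold ηm
        rcases eq_or_ne a a' with h | h
        · subst h; rfl
        · rw [if_neg h, if_neg (Ne.symm h)]
      rw [this]; ring
    · intro x
      have diag : ∀ a, (∑ a', ηm a a' * x a') = (if (a : ℕ) = 0 then (-1:ℝ) else 1) * x a := by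
        intro a
        unfold ηm
        rw [Finset.sum_eq_single a]
        · rw [if_pos rfl]
        · intro b _ hb
          rw [if_neg (fun h => hb h.symm), zero_mul]
        · intro h; exact absurd (mem_univ a) h
      have hq : dotProduct (star x) (Matrix.mulVec M x)
          = (∑ a : Fin n, (if (a : ℕ) = 0 then (-1:ℝ) else 1) * x a * x a)
            + (∑ a : Fin n, v a * x a) ^ 2 := by
        simp only [dotProduct, Matrix.mulVec, Matrix.of_apply, Pi.star_apply,
          star_trivial, hMdef]
        calc ∑ a, x a * ∑ a', (ηm a a' + v a * v a') * x a'
            = ∑ a : Fin n, ((if (a : ℕ) = 0 then (-1:ℝ) else 1) * x a * x a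
                + (v a * x a) * ∑ a', v a' * x a') := by
              refine sum_congr rfl fun a _ => ?_
              have split : (∑ a', (ηm a a' + v a * v a') * x a')
                  = (∑ a', ηm a a' * x a') + v a * ∑ a', v a' * x a' := by
                rw [Finset.mul_sum, ← Finset.sum_add_distrib]
                exact sum_congr rfl fun a' _ => by ring
              rw [split, diag a]; ring
          _ = (∑ a : Fin n, (if (a : ℕ) = 0 then (-1:ℝ) else 1) * x a * x a)
                + (∑ a : Fin n, v a * x a) ^ 2 := by
              rw [Finset.sum_add_distrib, ← Finset.sum_mul, sq]
      rw [hq, hsplit x]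
      have hsv : (∑ a ∈ univ.erase z, v a * v a) + (-1) * v z * v z = -1 := by
        rw [← hsplit v]; exact hv
      have hsd2 : (∑ a : Fin n, v a * x a) = (∑ a ∈ univ.erase z, v a * x a) + v z * x z :=
        (Finset.sum_erase_add _ _ (mem_univ z)).symm
      rw [hsd2]
      set S := ∑ a ∈ univ.erase z, x a * x a with hS'
      set V := ∑ a ∈ univ.erase z, v a * v a with hV'
      set P := ∑ a ∈ univ.erase z, v a * x a with hP'
      have hS : 0 ≤ S := sum_nonneg fun a _ => mul_self_nonneg _
      have hV : 0 ≤ V := sum_nonneg fun a _ => mul_self_nonneg _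
      have hCS : P ^ 2 ≤ V * S := by
        have h := Finset.sum_mul_sq_le_sq_mul_sq (univ.erase z) v x
        have e1 : (∑ a ∈ univ.erase z, v a ^ 2) = V :=
          sum_congr rfl fun a _ => pow_two (v a)
        have e2 : (∑ a ∈ univ.erase z, x a ^ 2) = S :=
          sum_congr rfl fun a _ => pow_two (x a)
        rw [e1, e2] at h
        exact h
      have hvv : v z * v z = 1 + V := by linarith
      rcases eq_or_lt_of_le hV with h0 | hVpos
      · have hP : P = 0 := by nlinarith [sq_nonneg P]
        have h2 : (v z * x z) ^ 2 = x z ^ 2 := by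
          rw [mul_pow, show v z ^ 2 = 1 by rw [sq]; linarith]
          ring
        rw [hP, zero_add, h2, pow_two]
        linarith
      · have key : V * (S + -1 * x z * x z + (P + v z * x z) ^ 2)
            = (V * x z + v z * P) ^ 2 + (V * S - P ^ 2) := by
          linear_combination (V * x z * x z - P * P) * hvv
        have hpos : 0 ≤ V * (S + -1 * x z * x z + (P + v z * x z) ^ 2) := by
          rw [key]
          have := sq_nonneg (V * x z + v z * P)
          linarith [hCS]
        nlinarith [hpos, hVpos]
  obtain ⟨B, hB⟩ : ∃ B : Matrix (Fin n) (Fin n) ℝ, M = B.conjTranspose * B := by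
    open scoped MatrixOrder in
    exact CStarAlgebra.nonneg_iff_eq_star_mul_self.mp hsd.nonneg
  refine ⟨fun k a => B k a, fun a a' => ?_⟩
  have := congrFun (congrFun hB a) a'
  simp only [Matrix.mul_apply, Matrix.conjTranspose_apply, star_trivial,
    Matrix.of_apply, hMdef] at this
  exact this

end Stmt13

/-- if all contractions of a multilinear 4-tensor `T` with a unit
timelike `u` vanish, then `T² = Σ T_{abcd} T^{abcd} ≥ 0`. -/
theorem stmt_13 {n : ℕ} (u : Fin n → ℝ) (hu : ηf u u = -1)
    (T : Tensor4 n) (hT : Multilinear4 T)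
    (h1 : ∀ y z w, T u y z w = 0) (h2 : ∀ x z w, T x u z w = 0)
    (h3 : ∀ x y w, T x y u w = 0) (h4 : ∀ x y z, T x y z u = 0) :
    0 ≤ sq4 T := by
  have hv : (∑ i : Fin n, (if (i : ℕ) = 0 then (-1 : ℝ) else 1) * u i * u i) = -1 := by
    have : ηf u u = ∑ i : Fin n, (if (i : ℕ) = 0 then (-1 : ℝ) else 1) * u i * u i := rfl
    rw [this] at hu
    exact hu
  unfold sq4
  refine Stmt13.main_aux u (Stmt13.M_psd u hv)
    (fun a b c d => T (stdb a) (stdb b) (stdb c) (stdb d)) ?_ ?_ ?_ ?_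
  · intro b c d
    have h := Stmt13.lin_expand (fun x => T x (stdb b) (stdb c) (stdb d)) (hT.1 _ _ _) u
    rw [← h]
    exact h1 _ _ _
  · intro a c d
    have h := Stmt13.lin_expand (fun y => T (stdb a) y (stdb c) (stdb d)) (hT.2.1 _ _ _) u
    rw [← h]
    exact h2 _ _ _
  · intro a b d
    have h := Stmt13.lin_expand (fun z => T (stdb a) (stdb b) z (stdb d)) (hT.2.2.1 _ _ _) u
    rw [← h]
    exact h3 _ _ _
  · intro a b c
    have h := Stmt13.lin_expand (fun w => T (stdb a) (stdb b) (stdb c) w) (hT.2.2.2 _ _ _) u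
    rw [← h]
    exact h4 _ _ _
end
end
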